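/- arXiv:1206.1965 — 6 statements merged into one kernel-verified Lean document; each statement's English description precedes it below -/
import Mathlib

section
/- Let A, B ⊆ ℝ be nonempty Borel sets with finite positive measure, and let δ > 0 satisfy δ < min(|A|,|B|). If |A+B| < |A| + |B| + δ, then there exist intervals I, J with A ⊆ I, B ⊆ J, |I| < |A| + δ, and |J| < |B| + δ. -/
/-!
Normalize compact sets `K ⊆ [0, l]` and `L ⊆ [0, m]` with `0, l ∈ K`, `0, m ∈ L` and `m ≤ l`.
Reduce `K + L` modulo `l`. Because `L + {0, l} ⊆ L + K`, every fibre of `K + L` over the circle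
`ℝ/lℤ` that is nonempty has at least one more point than the corresponding fibre of `L`.
Hence `|K + L| ≥ |L| + |(K + L) mod l|`. The continuous Cauchy–Davenport inequality on the
circle bounds the last term below by `min(l, |K| + |L|)`. That inequality is
`ZMod.cauchy_davenport` applied to the cells of a grid of mesh `l / p` (`p` prime), in the limit
`p → ∞`. Under the hypothesis the minimum is `l`, so `l ≤ |K + L| - |L|`. This forces
`|[0, l] \ K| < |L|`, and the same argument modulo `m` then gives `m ≤ |K + L| - |K|`.
Inner regularity passes from compact to measurable sets.
-/

open MeasureTheory Set Filter Topology Metric Function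
open scoped Pointwise ENNReal

def gridCell (u : ℝ) (k : ℕ) : Set ℝ := Ico (k * u) ((k + 1) * u)

section gridCell

variable {u : ℝ}

theorem volume_gridCell (k : ℕ) : volume (gridCell u k) = ENNReal.ofReal u := by
  rw [gridCell, Real.volume_Ico]; ring_nf

theorem pairwise_disjoint_gridCell : Pairwise (Disjoint on (gridCell u)) := fun m n hmn ↦ by
  simpa [gridCell, Function.onFun, zsmul_eq_mul] using
    pairwise_disjoint_Ico_add_zsmul (0 : ℝ) u (Int.ofNat_inj.not.mpr hmn)

theorem volume_biUnion_gridCell {ι : Type*} (s : Finset ι) {f : ι → ℕ} (hf : InjOn f s) :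
    volume (⋃ i ∈ s, gridCell u (f i)) = s.card * ENNReal.ofReal u := by
  have hdisj : PairwiseDisjoint (s : Set ι) (fun i ↦ gridCell u (f i)) :=
    fun i hi j hj hij ↦ pairwise_disjoint_gridCell (hf.ne hi hj hij)
  rw [measure_biUnion_finset hdisj (fun _ _ ↦ measurableSet_Ico)]
  simp [volume_gridCell]

theorem mem_gridCell_floor (hu : 0 < u) {x : ℝ} (hx : 0 ≤ x) : x ∈ gridCell u ⌊x / u⌋₊ :=
  ⟨(le_div_iff₀ hu).mp (Nat.floor_le (div_nonneg hx hu.le)),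
    (div_lt_iff₀ hu).mp (Nat.lt_floor_add_one _)⟩

theorem floor_div_lt_of_mem_Ico {p : ℕ} (hu : 0 < u) {x : ℝ} (hx : x ∈ Ico 0 (p * u)) :
    ⌊x / u⌋₊ < p :=
  (Nat.floor_lt (div_nonneg hx.1 hu.le)).mpr ((div_lt_iff₀ hu).mpr hx.2)

end gridCell

/-- The image of `S ∩ [0, ∞)` in `ℝ/τℤ`, represented in `[0, τ)`. -/
def wrapMod (τ : ℝ) (S : Set ℝ) : Set ℝ := {z ∈ Ico 0 τ | ∃ n : ℕ, z + n * τ ∈ S}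

section wrapMod

variable {τ : ℝ} {S T X : Set ℝ}

theorem wrapMod_mono (h : S ⊆ T) : wrapMod τ S ⊆ wrapMod τ T :=
  fun _ ⟨hz, n, hn⟩ ↦ ⟨hz, n, h hn⟩

theorem volume_wrapMod_le (hS : MeasurableSet S) : volume (wrapMod τ S) ≤ volume S :=
  calc volume (wrapMod τ S)
      ≤ volume (⋃ n : ℕ, (· + n * τ) ⁻¹' (S ∩ gridCell τ n)) :=
        measure_mono fun z ⟨hz, n, hn⟩ ↦ mem_iUnion.2
          ⟨n, hn, by simp only [gridCell, mem_Ico]; constructor <;> linarith [hz.1, hz.2]⟩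
    _ ≤ ∑' n : ℕ, volume ((· + n * τ) ⁻¹' (S ∩ gridCell τ n)) := measure_iUnion_le _
    _ = ∑' n : ℕ, volume (S ∩ gridCell τ n) := by simp_rw [measure_preimage_add_right]
    _ = volume (⋃ n : ℕ, S ∩ gridCell τ n) :=
        (measure_iUnion (fun _ _ h ↦ (pairwise_disjoint_gridCell h).mono inter_subset_right
          inter_subset_right) fun _ ↦ hS.inter measurableSet_Ico).symm
    _ ≤ volume S := measure_mono (iUnion_subset fun _ ↦ inter_subset_left)

theorem wrapMod_subset_wrapMod_sdiff (hτ : 0 < τ) (hX : BddAbove X)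
    (hXτ : ∀ x ∈ X, x + τ ∈ S) : wrapMod τ S ⊆ wrapMod τ (S \ X) := by
  rintro z ⟨hz, n, hn⟩
  refine ⟨hz, ?_⟩
  -- otherwise the fibre of `S` over `z` lies in `X` and, as `X + τ ⊆ S`, climbs forever
  by_contra! h
  simp only [Set.mem_sdiff, not_and, not_not] at h
  have hX' : ∀ j : ℕ, z + (n + j : ℕ) * τ ∈ X := by
    intro j
    induction j with
    | zero => exact h n hn
    | succ j ih =>
      refine h _ ?_
      convert hXτ _ ih using 1
      push_cast; ring
  obtain ⟨M, hM⟩ := hX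
  obtain ⟨j, hj⟩ := exists_nat_gt (M / τ)
  have hjM : M < j * τ := (div_lt_iff₀ hτ).mp hj
  have hnτ : 0 ≤ (n : ℝ) * τ := by positivity
  have := hM (hX' j)
  push_cast at this
  linarith [hz.1]

theorem volume_add_volume_wrapMod_le (hτ : 0 < τ) (hX : MeasurableSet X) (hXb : BddAbove X)
    (hS : MeasurableSet S) (hXS : X ⊆ S) (hXτ : ∀ x ∈ X, x + τ ∈ S) :
    volume X + volume (wrapMod τ S) ≤ volume S :=
  calc volume X + volume (wrapMod τ S) ≤ volume X + volume (S \ X) := by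
        refine add_le_add le_rfl ?_
        exact (measure_mono (wrapMod_subset_wrapMod_sdiff hτ hXb hXτ)).trans
          (volume_wrapMod_le (hS.diff hX))
    _ = volume S := by
        rw [measure_add_sdiff hX.nullMeasurableSet, union_eq_self_of_subset_left hXS]

end wrapMod

noncomputable def cellIndices (p : ℕ) [NeZero p] (u : ℝ) (X : Set ℝ) : Finset (ZMod p) :=
  (Set.toFinite {i : ZMod p | (gridCell u i.val ∩ X).Nonempty}).toFinset

section cellIndices

variable {p : ℕ} [NeZero p] {u : ℝ} {P Q X : Set ℝ}

theorem mem_cellIndices {i : ZMod p} :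
    i ∈ cellIndices p u X ↔ (gridCell u i.val ∩ X).Nonempty :=
  Set.Finite.mem_toFinset _

theorem exists_mem_cellIndices (hu : 0 < u) (hX : X ⊆ Ico 0 (p * u)) {x : ℝ} (hx : x ∈ X) :
    ∃ i ∈ cellIndices p u X, x ∈ gridCell u i.val := by
  have hval : ((⌊x / u⌋₊ : ℕ) : ZMod p).val = ⌊x / u⌋₊ :=
    ZMod.val_cast_of_lt (floor_div_lt_of_mem_Ico hu (hX hx))
  have hcell := mem_gridCell_floor hu (hX hx).1
  rw [← hval] at hcell
  exact ⟨_, mem_cellIndices.2 ⟨x, hcell, hx⟩, hcell⟩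

theorem volume_le_card_cellIndices (hu : 0 < u) (hX : X ⊆ Ico 0 (p * u)) :
    volume X ≤ (cellIndices p u X).card * ENNReal.ofReal u := by
  rw [← volume_biUnion_gridCell _ (ZMod.val_injective p).injOn]
  refine measure_mono fun x hx ↦ ?_
  obtain ⟨i, hi, hxi⟩ := exists_mem_cellIndices hu hX hx
  exact mem_biUnion hi hxi

theorem gridCell_val_add_subset_wrapMod (hu : 0 < u) {i j : ZMod p}
    (hi : i ∈ cellIndices p u P) (hj : j ∈ cellIndices p u Q) :
    gridCell u (i + j).val ⊆ wrapMod (p * u) (thickening (2 * u) (P + Q)) := by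
  obtain ⟨x, ⟨hx₁, hx₂⟩, hxP⟩ := mem_cellIndices.1 hi
  obtain ⟨y, ⟨hy₁, hy₂⟩, hyQ⟩ := mem_cellIndices.1 hj
  rintro z ⟨hz₁, hz₂⟩
  have hlt : ((i + j).val : ℝ) + 1 ≤ p := by exact_mod_cast (i + j).val_lt
  have hzτ : z ∈ Ico 0 (p * u) := ⟨le_trans (by positivity) hz₁, by nlinarith⟩
  -- `(i + j).val = (i.val + j.val) % p`: moving `z` up by `(i.val + j.val) / p` periods lands
  -- in `gridCell u (i.val + j.val)`, within `2 * u` of `x + y`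
  rw [ZMod.val_add] at hz₁ hz₂
  have hdiv : (((i.val + j.val) % p : ℕ) : ℝ) + ((i.val + j.val) / p : ℕ) * p =
      i.val + j.val := by
    exact_mod_cast Nat.mod_add_div' _ p
  refine ⟨hzτ, (i.val + j.val) / p,
    mem_thickening_iff.2 ⟨x + y, add_mem_add hxP hyQ, ?_⟩⟩
  rw [Real.dist_eq, abs_lt]
  constructor <;> nlinarith

end cellIndices

theorem min_le_volume_wrapMod_thickening {p : ℕ} {u : ℝ} {P Q : Set ℝ} (hp : p.Prime)
    (hu : 0 < u) (hP : P ⊆ Ico 0 (p * u)) (hQ : Q ⊆ Ico 0 (p * u)) (hPne : P.Nonempty)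
    (hQne : Q.Nonempty) :
    min (ENNReal.ofReal (p * u)) (volume P + volume Q) ≤
      volume (wrapMod (p * u) (thickening (2 * u) (P + Q))) + ENNReal.ofReal u := by
  have : NeZero p := ⟨hp.ne_zero⟩
  set IP := cellIndices p u P
  set IQ := cellIndices p u Q
  have hIP : IP.Nonempty := by
    obtain ⟨x, hx⟩ := hPne
    obtain ⟨i, hi, -⟩ := exists_mem_cellIndices hu hP hx
    exact ⟨i, hi⟩
  have hIQ : IQ.Nonempty := by
    obtain ⟨x, hx⟩ := hQne
    obtain ⟨i, hi, -⟩ := exists_mem_cellIndices hu hQ hx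
    exact ⟨i, hi⟩
  have hCD : min p (IP.card + IQ.card) ≤ (IP + IQ).card + 1 := by
    have := ZMod.cauchy_davenport hp hIP hIQ
    omega
  have hsum : (IP + IQ).card * ENNReal.ofReal u ≤
      volume (wrapMod (p * u) (thickening (2 * u) (P + Q))) := by
    rw [← volume_biUnion_gridCell _ (ZMod.val_injective p).injOn]
    refine measure_mono (iUnion₂_subset fun s hs ↦ ?_)
    obtain ⟨i, hi, j, hj, rfl⟩ := Finset.mem_add.1 hs
    exact gridCell_val_add_subset_wrapMod hu hi hj
  calc min (ENNReal.ofReal (p * u)) (volume P + volume Q)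
      ≤ min (p * ENNReal.ofReal u)
          (IP.card * ENNReal.ofReal u + IQ.card * ENNReal.ofReal u) := by
        rw [ENNReal.ofReal_mul (Nat.cast_nonneg p), ENNReal.ofReal_natCast]
        exact min_le_min le_rfl (add_le_add (volume_le_card_cellIndices hu hP)
          (volume_le_card_cellIndices hu hQ))
    _ = (min p (IP.card + IQ.card) : ℕ) * ENNReal.ofReal u := by
        rw [Nat.mono_cast.map_min, Nat.cast_add, min_mul_of_nonneg _ _ zero_le, add_mul]
    _ ≤ ((IP + IQ).card + 1 : ℕ) * ENNReal.ofReal u := by gcongr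
    _ ≤ volume (wrapMod (p * u) (thickening (2 * u) (P + Q))) + ENNReal.ofReal u := by
        push_cast
        rw [add_mul, one_mul]
        exact add_le_add hsum le_rfl

theorem exists_prime_div_lt (τ : ℝ) {η : ℝ} (hη : 0 < η) : ∃ p : ℕ, p.Prime ∧ τ / p < η := by
  obtain ⟨N, hN⟩ := exists_nat_gt (τ / η)
  obtain ⟨p, hNp, hp⟩ := Nat.exists_infinite_primes N
  have hp0 : (0 : ℝ) < p := Nat.cast_pos.2 hp.pos
  refine ⟨p, hp, (div_lt_iff₀ hp0).2 ?_⟩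
  have : (N : ℝ) ≤ p := Nat.cast_le.2 hNp
  rw [div_lt_iff₀ hη] at hN
  nlinarith

theorem volume_add_min_le_volume_add {X Y P Q : Set ℝ} {τ : ℝ} (hX : IsCompact X)
    (hY : IsCompact Y) (hτ : 0 < τ) (h0 : (0 : ℝ) ∈ Y) (hτY : τ ∈ Y) (hP : P ⊆ Ico 0 τ)
    (hQ : Q ⊆ Ico 0 τ) (hPne : P.Nonempty) (hQne : Q.Nonempty) (hPQ : P + Q ⊆ X + Y) :
    volume X + min (ENNReal.ofReal τ) (volume P + volume Q) ≤ volume (X + Y) := by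
  set c := volume X + min (ENNReal.ofReal τ) (volume P + volume Q)
  have hprime : ∀ p : ℕ, p.Prime →
      c ≤ volume (thickening (2 * (τ / p)) (X + Y)) + ENNReal.ofReal (τ / p) := by
    intro p hp
    have hu : 0 < τ / p := div_pos hτ (Nat.cast_pos.2 hp.pos)
    have hpu : p * (τ / p) = τ := mul_div_cancel₀ _ (Nat.cast_ne_zero.2 hp.ne_zero)
    set S := thickening (2 * (τ / p)) (X + Y)
    have hXS : ∀ y ∈ Y, ∀ x ∈ X, x + y ∈ S := fun y hy x hx ↦
      self_subset_thickening (by positivity) _ (add_mem_add hx hy)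
    have hCD := min_le_volume_wrapMod_thickening hp hu (by rwa [hpu]) (by rwa [hpu]) hPne hQne
    rw [hpu] at hCD
    calc c ≤ volume X + (volume (wrapMod τ S) + ENNReal.ofReal (τ / p)) := by
          refine add_le_add le_rfl (hCD.trans ?_)
          gcongr
          exact wrapMod_mono (thickening_subset_of_subset _ hPQ)
      _ ≤ volume S + ENNReal.ofReal (τ / p) := by
          rw [← add_assoc]
          refine add_le_add (volume_add_volume_wrapMod_le hτ hX.isClosed.measurableSet
            hX.bddAbove isOpen_thickening.measurableSet (fun x hx ↦ ?_) (hXS τ hτY)) le_rfl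
          simpa using hXS 0 h0 x hx
  -- first the mesh `τ / p` tends to `0` at a fixed thickening radius `r`, then `r` does
  have hthick : ∀ r ∈ Ioi (0 : ℝ), c ≤ volume (cthickening r (X + Y)) := by
    intro r hr
    refine ENNReal.le_of_forall_pos_le_add fun ε hε _ ↦ ?_
    obtain ⟨p, hp, hpη⟩ := exists_prime_div_lt τ (lt_min (half_pos hr) hε)
    refine (hprime p hp).trans (add_le_add ?_ ?_)
    · refine measure_mono ((thickening_mono ?_ _).trans (thickening_subset_cthickening _ _))
      linarith [hpη.trans_le (min_le_left _ _)]
    · exact ENNReal.ofReal_le_of_le_toReal (hpη.le.trans (min_le_right _ _))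
  exact ge_of_tendsto ((tendsto_measure_cthickening_of_isCompact (hX.add hY)).mono_left
    nhdsWithin_le_nhds) (eventually_nhdsWithin_of_forall hthick)

theorem volume_inter_Ico_of_subset_Icc {S : Set ℝ} {a b : ℝ} (h : S ⊆ Icc a b) :
    volume (S ∩ Ico a b) = volume S := by
  rw [measure_congr ((ae_eq_refl S).inter Ico_ae_eq_Icc), inter_eq_left.2 h]

theorem ofReal_add_volume_le_volume_add_of_subset_Icc {P Q : Set ℝ} {l m : ℝ}
    (hPc : IsCompact P) (hQc : IsCompact Q) (hP : P ⊆ Icc 0 l) (h0P : (0 : ℝ) ∈ P) (hlP : l ∈ P)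
    (hQ : Q ⊆ Icc 0 m) (h0Q : (0 : ℝ) ∈ Q) (hmQ : m ∈ Q) (hml : m ≤ l)
    (hlt : volume (P + Q) < volume P + 2 * volume Q) :
    ENNReal.ofReal l + volume Q ≤ volume (P + Q) ∧
      ENNReal.ofReal m + volume P ≤ volume (P + Q) := by
  have hPm : MeasurableSet P := hPc.isClosed.measurableSet
  have hPPQ : volume P ≤ volume (P + Q) :=
    measure_mono fun x hx ↦ by simpa using add_mem_add hx h0Q
  have hQpos : volume Q ≠ 0 := by
    intro h
    rw [h, mul_zero, add_zero] at hlt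
    exact hlt.not_ge hPPQ
  have hm : 0 < m := by
    by_contra! h
    refine hQpos (nonpos_iff_eq_zero.1 ((measure_mono hQ).trans ?_))
    rw [Real.volume_Icc, ENNReal.ofReal_of_nonpos (by linarith)]
  have hl : 0 < l := hm.trans_le hml
  have hQl : Q ⊆ Icc 0 l := hQ.trans (Icc_subset_Icc le_rfl hml)
  have ha := volume_add_min_le_volume_add (P := P ∩ Ico 0 l) (Q := Q ∩ Ico 0 l) hQc hPc hl
    h0P hlP inter_subset_right inter_subset_right ⟨0, h0P, left_mem_Ico.2 hl⟩
    ⟨0, h0Q, left_mem_Ico.2 hl⟩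
    (by rw [add_comm Q P]; exact add_subset_add inter_subset_left inter_subset_left)
  rw [volume_inter_Ico_of_subset_Icc hP, volume_inter_Ico_of_subset_Icc hQl, add_comm Q P] at ha
  have hlPQ : ENNReal.ofReal l < volume P + volume Q := by
    refine (min_lt_iff.1 (lt_of_add_lt_add_left (a := volume Q) (ha.trans_lt ?_))).resolve_right
      (lt_irrefl _)
    calc volume (P + Q) < volume P + 2 * volume Q := hlt
      _ = volume Q + (volume P + volume Q) := by ring
  rw [min_eq_left hlPQ.le] at ha
  refine ⟨by rwa [add_comm], ?_⟩
  have hgap : volume (Icc 0 l \ P) < volume Q := by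
    refine lt_of_add_lt_add_left (a := volume P) ?_
    have hsplit := measure_inter_add_sdiff (μ := volume) (Icc 0 l) hPm
    rw [inter_eq_right.2 hP, Real.volume_Icc, sub_zero] at hsplit
    rwa [hsplit]
  have hmP : ENNReal.ofReal m ≤ volume (P ∩ Ico 0 m) + volume Q := by
    have hsplit := measure_inter_add_sdiff (μ := volume) (Ico 0 m) hPm
    rw [Real.volume_Ico, sub_zero, inter_comm] at hsplit
    rw [← hsplit]
    refine add_le_add le_rfl ((measure_mono (sdiff_subset_sdiff_left ?_)).trans hgap.le)
    exact Ico_subset_Icc_self.trans (Icc_subset_Icc le_rfl hml)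
  have hb := volume_add_min_le_volume_add (P := P ∩ Ico 0 m) (Q := Q ∩ Ico 0 m) hPc hQc hm
    h0Q hmQ inter_subset_right inter_subset_right ⟨0, h0P, left_mem_Ico.2 hm⟩
    ⟨0, h0Q, left_mem_Ico.2 hm⟩
    (add_subset_add inter_subset_left inter_subset_left)
  rwa [volume_inter_Ico_of_subset_Icc hQ, min_eq_left hmP, add_comm] at hb

theorem ofReal_sSup_sub_sInf_add_volume_le_volume_add {K L : Set ℝ} (hK : IsCompact K)
    (hL : IsCompact L) (hKne : K.Nonempty) (hLne : L.Nonempty)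
    (h₁ : volume (K + L) < volume K + 2 * volume L)
    (h₂ : volume (K + L) < volume L + 2 * volume K) :
    ENNReal.ofReal (sSup K - sInf K) + volume L ≤ volume (K + L) := by
  have normalize : ∀ S : Set ℝ, IsCompact S → S.Nonempty →
      IsCompact ({-sInf S} + S) ∧ {-sInf S} + S ⊆ Icc 0 (sSup S - sInf S) ∧
        (0 : ℝ) ∈ {-sInf S} + S ∧ sSup S - sInf S ∈ {-sInf S} + S := by
    intro S hS hne
    refine ⟨isCompact_singleton.add hS, ?_, ⟨_, rfl, _, hS.sInf_mem hne, by ring⟩,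
      ⟨_, rfl, _, hS.sSup_mem hne, by ring⟩⟩
    rintro _ ⟨_, rfl, s, hs, rfl⟩
    constructor <;> linarith [csInf_le hS.bddBelow hs, le_csSup hS.bddAbove hs]
  have hvol : ∀ (a : ℝ) (S : Set ℝ), volume ({a} + S) = volume S := fun a S ↦ by
    rw [singleton_add, image_add_left, measure_preimage_add]
  have hsum : ({-sInf K} + K) + ({-sInf L} + L) = {-sInf K + -sInf L} + (K + L) := by
    rw [add_add_add_comm, singleton_add_singleton]
  obtain ⟨hPc, hP, h0P, hlP⟩ := normalize K hK hKne
  obtain ⟨hQc, hQ, h0Q, hmQ⟩ := normalize L hL hLne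
  rcases le_total (sSup L - sInf L) (sSup K - sInf K) with h | h
  · have := (ofReal_add_volume_le_volume_add_of_subset_Icc hPc hQc hP h0P hlP hQ h0Q hmQ h
      (by rwa [hsum, hvol, hvol, hvol])).1
    rwa [hsum, hvol, hvol] at this
  · have := (ofReal_add_volume_le_volume_add_of_subset_Icc hQc hPc hQ h0Q hmQ hP h0P hlP h
      (by rwa [add_comm ({-sInf L} + L), hsum, hvol, hvol, hvol])).2
    rwa [add_comm ({-sInf L} + L), hsum, hvol, hvol] at this

theorem MeasurableSet.exists_seq_isCompact_tendsto {α : Type*} [TopologicalSpace α]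
    [MeasurableSpace α] {μ : Measure α} [μ.InnerRegular] {A C : Set α} (hA : MeasurableSet A)
    (hC : IsCompact C) (hCA : C ⊆ A) :
    ∃ K : ℕ → Set α, (∀ n, IsCompact (K n) ∧ C ⊆ K n ∧ K n ⊆ A) ∧
      Tendsto (fun n ↦ μ (K n)) atTop (𝓝 (μ A)) := by
  set S := (fun K ↦ μ K) '' {K | IsCompact K ∧ C ⊆ K ∧ K ⊆ A}
  have hS : sSup S = μ A := by
    refine le_antisymm (sSup_le ?_) (le_of_forall_lt fun r hr ↦ ?_)
    · rintro _ ⟨K, ⟨-, -, hKA⟩, rfl⟩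
      exact measure_mono hKA
    · obtain ⟨K, hKA, hK, hrK⟩ := hA.exists_lt_isCompact hr
      exact (hrK.trans_le (measure_mono subset_union_left)).trans_le
        (le_sSup ⟨K ∪ C, ⟨hK.union hC, subset_union_right, union_subset hKA hCA⟩, rfl⟩)
  obtain ⟨u, -, hu, huS⟩ :=
    exists_seq_tendsto_sSup (⟨μ C, C, ⟨hC, subset_rfl, hCA⟩, rfl⟩ : S.Nonempty)
      (OrderTop.bddAbove S)
  choose K hK hKu using huS
  refine ⟨K, hK, ?_⟩
  simpa only [hKu, hS] using hu

theorem ofReal_sub_add_volume_le_volume_add {A B : Set ℝ} (hA : MeasurableSet A)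
    (hB : MeasurableSet B) (hBne : B.Nonempty) (h₁ : volume (A + B) < volume A + 2 * volume B)
    (h₂ : volume (A + B) < volume B + 2 * volume A) {x y : ℝ} (hx : x ∈ A) (hy : y ∈ A) :
    ENNReal.ofReal (y - x) + volume B ≤ volume (A + B) := by
  obtain ⟨b, hb⟩ := hBne
  obtain ⟨K, hK, hKA⟩ := hA.exists_seq_isCompact_tendsto (μ := volume) (C := {x, y})
    (toFinite _).isCompact (insert_subset hx (singleton_subset_iff.2 hy))
  obtain ⟨L, hL, hLB⟩ := hB.exists_seq_isCompact_tendsto (μ := volume) isCompact_singleton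
    (singleton_subset_iff.2 hb)
  have hev₁ : ∀ᶠ n in atTop, volume (A + B) < volume (K n) + 2 * volume (L n) :=
    (hKA.add (ENNReal.Tendsto.const_mul hLB (Or.inr ENNReal.ofNat_ne_top))).eventually_const_lt
      h₁
  have hev₂ : ∀ᶠ n in atTop, volume (A + B) < volume (L n) + 2 * volume (K n) :=
    (hLB.add (ENNReal.Tendsto.const_mul hKA (Or.inr ENNReal.ofNat_ne_top))).eventually_const_lt
      h₂
  refine le_of_tendsto (hLB.const_add _) ?_
  filter_upwards [hev₁, hev₂] with n hn₁ hn₂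
  obtain ⟨hKc, hxyK, hKA'⟩ := hK n
  obtain ⟨hLc, hbL, hLB'⟩ := hL n
  have hxK : x ∈ K n := hxyK (mem_insert _ _)
  have hyK : y ∈ K n := hxyK (mem_insert_of_mem _ rfl)
  have hsub : volume (K n + L n) ≤ volume (A + B) := measure_mono (add_subset_add hKA' hLB')
  calc ENNReal.ofReal (y - x) + volume (L n)
      ≤ ENNReal.ofReal (sSup (K n) - sInf (K n)) + volume (L n) := by
        gcongr
        exacts [le_csSup hKc.bddAbove hyK, csInf_le hKc.bddBelow hxK]
    _ ≤ volume (K n + L n) := ofReal_sSup_sub_sInf_add_volume_le_volume_add hKc hLc ⟨x, hxK⟩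
        ⟨b, hbL rfl⟩ (hsub.trans_lt hn₁) (hsub.trans_lt hn₂)
    _ ≤ volume (A + B) := hsub

theorem exists_ordConnected_superset_volume_le {A : Set ℝ} {D : ℝ≥0∞} (hD : D ≠ ∞)
    (h : ∀ x ∈ A, ∀ y ∈ A, ENNReal.ofReal (y - x) ≤ D) :
    ∃ I : Set ℝ, I.OrdConnected ∧ A ⊆ I ∧ volume I ≤ D := by
  have hdiam : ediam A ≤ D := ediam_le fun x hx y hy ↦ by
    rw [edist_dist, Real.dist_eq]
    rcases le_total x y with hxy | hxy
    · rw [abs_sub_comm, abs_of_nonneg (sub_nonneg.2 hxy)]; exact h x hx y hy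
    · rw [abs_of_nonneg (sub_nonneg.2 hxy)]; exact h y hy x hx
  have hbdd : Bornology.IsBounded A :=
    isBounded_iff_ediam_ne_top.2 (ne_top_of_le_ne_top hD hdiam)
  refine ⟨Icc (sInf A) (sSup A), ordConnected_Icc, hbdd.subset_Icc_sInf_sSup, ?_⟩
  rwa [Real.volume_Icc, ← Real.ediam_eq hbdd]

theorem exists_ordConnected_superset_volume_add_le {A B : Set ℝ} (hA : MeasurableSet A)
    (hB : MeasurableSet B) (hAne : A.Nonempty) (hBne : B.Nonempty)
    (h₁ : volume (A + B) < volume A + 2 * volume B)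
    (h₂ : volume (A + B) < volume B + 2 * volume A) :
    ∃ I : Set ℝ, I.OrdConnected ∧ A ⊆ I ∧ volume I + volume B ≤ volume (A + B) := by
  have key : ∀ x ∈ A, ∀ y ∈ A, ENNReal.ofReal (y - x) + volume B ≤ volume (A + B) :=
    fun x hx y hy ↦ ofReal_sub_add_volume_le_volume_add hA hB hBne h₁ h₂ hx hy
  obtain ⟨a, ha⟩ := hAne
  have hBle : volume B ≤ volume (A + B) := by simpa using key a ha a ha
  have hBfin : volume B ≠ ∞ := ne_top_of_le_ne_top h₁.ne_top hBle
  obtain ⟨I, hI, hAI, hIvol⟩ := exists_ordConnected_superset_volume_le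
    (ENNReal.sub_ne_top h₁.ne_top) fun x hx y hy ↦
      ENNReal.le_sub_of_add_le_right hBfin (key x hx y hy)
  exact ⟨I, hI, hAI, (ENNReal.le_sub_iff_add_le_right hBfin hBle).1 hIvol⟩

theorem stmt0_general (A B : Set ℝ) (δ : ℝ) (hA : MeasurableSet A) (hB : MeasurableSet B)
    (hAne : A.Nonempty) (hBne : B.Nonempty)
    (hδsmall : ENNReal.ofReal δ < min (volume A) (volume B))
    (hsum : volume (A + B) < volume A + volume B + ENNReal.ofReal δ) :
    ∃ I J : Set ℝ, I.OrdConnected ∧ J.OrdConnected ∧ A ⊆ I ∧ B ⊆ J ∧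
      volume I < volume A + ENNReal.ofReal δ ∧
      volume J < volume B + ENNReal.ofReal δ := by
  have h₁ : volume (A + B) < volume A + 2 * volume B :=
    calc volume (A + B) < volume A + volume B + ENNReal.ofReal δ := hsum
      _ ≤ volume A + volume B + volume B := by gcongr; exact hδsmall.le.trans (min_le_right _ _)
      _ = volume A + 2 * volume B := by ring
  have h₂ : volume (A + B) < volume B + 2 * volume A :=
    calc volume (A + B) < volume A + volume B + ENNReal.ofReal δ := hsum
      _ ≤ volume A + volume B + volume A := by gcongr; exact hδsmall.le.trans (min_le_left _ _)
      _ = volume B + 2 * volume A := by ring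
  obtain ⟨I, hI, hAI, hIvol⟩ := exists_ordConnected_superset_volume_add_le hA hB hAne hBne h₁ h₂
  obtain ⟨J, hJ, hBJ, hJvol⟩ := exists_ordConnected_superset_volume_add_le hB hA hBne hAne
    (by rwa [add_comm B A]) (by rwa [add_comm B A])
  rw [add_comm B A] at hJvol
  have hBfin : volume B ≠ ∞ := ne_top_of_le_ne_top h₁.ne_top (le_add_self.trans hIvol)
  have hAfin : volume A ≠ ∞ := ne_top_of_le_ne_top h₁.ne_top (le_add_self.trans hJvol)
  refine ⟨I, J, hI, hJ, hAI, hBJ, (ENNReal.add_lt_add_iff_right hBfin).1 ?_,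
    (ENNReal.add_lt_add_iff_right hAfin).1 ?_⟩
  · calc volume I + volume B ≤ volume (A + B) := hIvol
      _ < volume A + ENNReal.ofReal δ + volume B := hsum.trans_eq (by ring)
  · calc volume J + volume A ≤ volume (A + B) := hJvol
      _ < volume B + ENNReal.ofReal δ + volume A := hsum.trans_eq (by ring)

theorem stmt0 (A B : Set ℝ) (δ : ℝ) (hA : MeasurableSet A) (hB : MeasurableSet B)
    (hAne : A.Nonempty) (hBne : B.Nonempty)
    (hA0 : 0 < volume A) (hAfin : volume A < ⊤)
    (hB0 : 0 < volume B) (hBfin : volume B < ⊤)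
    (hδ0 : 0 < δ)
    (hδsmall : ENNReal.ofReal δ < min (volume A) (volume B))
    (hsum : volume (A + B) < volume A + volume B + ENNReal.ofReal δ) :
    ∃ I J : Set ℝ, I.OrdConnected ∧ J.OrdConnected ∧ A ⊆ I ∧ B ⊆ J ∧
      volume I < volume A + ENNReal.ofReal δ ∧
      volume J < volume B + ENNReal.ofReal δ :=
  stmt0_general A B δ hA hB hAne hBne hδsmall hsum
end

section
/- Let A, B ⊆ ℝ be compact sets with finite Lebesgue measure, and let I be an interval containing sup B. If |A+B| ≤ |A| + |B| + δ, then |A + (B \ I)| ≤ |A| + |B \ I| + δ. -/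
/-!
Translating the part `B ∩ I` of `B` by `max A` lands in `A + B` to the right of `A + (B \ I)`,
since every point of `B \ I` lies below every point of `I` (as `I` is an interval reaching up to
`sup B`). The two pieces meet in at most one point, so `|A + (B \ I)| + |B ∩ I| ≤ |A + B|`, and
subtracting `|B ∩ I|` from both sides of the hypothesis gives the claim.
-/

open MeasureTheory Set
open scoped Pointwise ENNReal

lemma Set.OrdConnected.le_of_mem_diff {B I : Set ℝ} (hI : I.OrdConnected) (hB : BddAbove B)
    (hsupB : sSup B ∈ I) {x z : ℝ} (hx : x ∈ B \ I) (hz : z ∈ I) : x ≤ z := by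
  by_contra! hzx
  exact hx.2 (hI.out hz hsupB ⟨hzx.le, le_csSup hB hx.1⟩)

lemma volume_add_add_volume_le_volume_add_union {A C D : Set ℝ} {a : ℝ} (ha : IsGreatest A a)
    (hD : MeasurableSet D) (hCD : ∀ c ∈ C, ∀ d ∈ D, c ≤ d) :
    volume (A + C) + volume D ≤ volume (A + (C ∪ D)) := by
  have hinter : (A + C) ∩ (a +ᵥ D) ⊆ {a + sInf D} := by
    rintro _ ⟨⟨u, hu, c, hc, rfl⟩, ⟨d, hd, hcd⟩⟩
    simp only [vadd_eq_add] at hcd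
    have hleast : IsLeast D d := ⟨hd, fun d' hd' => by
      linarith [add_le_add (ha.2 hu) (hCD c hc d' hd')]⟩
    rw [mem_singleton_iff, hleast.csInf_eq]
    exact hcd.symm
  have hnull : volume ((A + C) ∩ (a +ᵥ D)) = 0 :=
    measure_mono_null hinter (measure_singleton _)
  calc volume (A + C) + volume D
      = volume (A + C) + volume (a +ᵥ D) := by rw [measure_vadd]
    _ = volume ((A + C) ∪ (a +ᵥ D)) := by
        rw [← measure_union_add_inter _ (hD.const_vadd a), hnull, add_zero]
    _ ≤ volume (A + (C ∪ D)) := measure_mono <| union_subset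
        (add_subset_add_left subset_union_left)
        ((vadd_set_subset_add ha.1).trans (add_subset_add_left subset_union_right))

theorem stmt1 (A B : Set ℝ) (I : Set ℝ) (δ : ℝ)
    (hA : IsCompact A) (hB : IsCompact B)
    (hI : I.OrdConnected) (hsupB : sSup B ∈ I)
    (hsum : volume (A + B) ≤ volume A + volume B + ENNReal.ofReal δ) :
    volume (A + (B \ I)) ≤ volume A + volume (B \ I) + ENNReal.ofReal δ := by
  rcases A.eq_empty_or_nonempty with rfl | hAne
  · simp
  have hsplit : volume (A + (B \ I)) + volume (B ∩ I) ≤ volume (A + B) := by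
    simpa only [sdiff_union_inter] using
      volume_add_add_volume_le_volume_add_union (hA.isGreatest_sSup hAne)
        (hB.measurableSet.inter hI.measurableSet)
        fun x hx z hz => hI.le_of_mem_diff hB.bddAbove hsupB hx hz.2
  have hfin : volume (B ∩ I) ≠ ∞ :=
    (measure_mono_top inter_subset_left).mt hB.measure_lt_top.ne
  refine (ENNReal.add_le_add_iff_right hfin).mp ?_
  calc volume (A + (B \ I)) + volume (B ∩ I) ≤ volume A + volume B + ENNReal.ofReal δ :=
        hsplit.trans hsum
    _ = volume A + volume (B \ I) + ENNReal.ofReal δ + volume (B ∩ I) := by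
        rw [← measure_sdiff_add_inter B hI.measurableSet]; ring
end

section
/- Let A, B ⊆ ℝ^d = ℝ × ℝ^{d-1} be compact sets and t ∈ (0,1). For x ∈ ℝ let A_x = {y ∈ ℝ^{d-1} : (x,y) ∈ A} and similarly B_x, S_x where S = tA + (1-t)B. Then for any λ > 0 and γ, γ̃ > 0 with γ^t γ̃^{1-t} = 1, if the sets {x : |A_x| > γλ} and {x : |B_x| > γ̃λ} are both nonempty, then {x : |S_x| > λ} ⊇ t{x : |A_x| > γλ} + (1-t){x : |B_x| > γ̃λ}. -/
open MeasureTheory Set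
open scoped Pointwise ENNReal NNReal

/-!
Slices of `S = t • A + (1 - t) • B` contain Minkowski combinations of slices of `A` and `B`, so the
Brunn–Minkowski inequality in the fibre gives
`|S_{t x' + (1 - t) x''}| ≥ |A_{x'}|^t |B_{x''}|^(1-t)`.
Strict monotonicity of the weighted geometric mean turns this into the inclusion of superlevel
sets, since `(γ λ)^t (γ̃ λ)^(1-t) = λ`.

Brunn–Minkowski in the fibre `ℝ^(d-1)` is itself proved by induction on the dimension. After
rescaling the slice functions of `A` and `B` to a common supremum, their superlevel sets at each
level are nonempty or empty together; in the first case the inclusion above and the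
one-dimensional inequality `|U + V| ≥ |U| + |V|` bound the superlevel sets of the slice function of
`S`, and integrating over the level (layer cake) gives the one-dimensional Prékopa–Leindler
inequality for the slice functions, i.e. Brunn–Minkowski one dimension up.
-/

theorem ENNReal.rpow_mul_rpow_one_sub_le {t : ℝ} (ht : t ∈ Ioo (0 : ℝ) 1) (x y : ℝ≥0∞) :
    x ^ t * y ^ (1 - t) ≤ ENNReal.ofReal t * x + ENNReal.ofReal (1 - t) * y := by
  have ht' : 0 < 1 - t := sub_pos.2 ht.2
  rcases eq_or_ne x ⊤ with rfl | hx
  · simp [ENNReal.mul_top, ht.1]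
  rcases eq_or_ne y ⊤ with rfl | hy
  · simp [ENNReal.mul_top, ht.2]
  lift x to ℝ≥0 using hx
  lift y to ℝ≥0 using hy
  have key := NNReal.geom_mean_le_arith_mean2_weighted t.toNNReal (1 - t).toNNReal x y
    (by rw [← Real.toNNReal_add ht.1.le ht'.le]; simp)
  rw [Real.coe_toNNReal _ ht.1.le, Real.coe_toNNReal _ ht'.le] at key
  rw [← ENNReal.coe_rpow_of_nonneg _ ht.1.le, ← ENNReal.coe_rpow_of_nonneg _ ht'.le]
  exact ENNReal.coe_le_coe.2 key |>.trans_eq (by simp [ENNReal.ofReal])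

theorem lintegral_eq_lintegral_measure_ofReal_lt {α : Type*} [MeasurableSpace α] {μ : Measure α}
    [SFinite μ] {φ : α → ℝ≥0∞} (hφ : Measurable φ) :
    ∫⁻ x, φ x ∂μ = ∫⁻ s in Ioi (0 : ℝ), μ {x | ENNReal.ofReal s < φ x} := by
  have hE : MeasurableSet {p : α × ℝ | ENNReal.ofReal p.2 < φ p.1} :=
    measurableSet_lt (ENNReal.measurable_ofReal.comp measurable_snd) (hφ.comp measurable_fst)
  have volume_level (a : ℝ≥0∞) : volume.restrict (Ioi 0) {s : ℝ | ENNReal.ofReal s < a} = a := by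
    rcases eq_or_ne a ⊤ with rfl | ha
    · simp
    have : {s : ℝ | ENNReal.ofReal s < a} ∩ Ioi 0 = Ioo 0 a.toReal := by
      ext s
      simp only [mem_inter_iff, mem_ofPred_eq, mem_Ioi, mem_Ioo]
      constructor
      · rintro ⟨hs, hs0⟩
        exact ⟨hs0, (ENNReal.ofReal_lt_iff_lt_toReal hs0.le ha).1 hs⟩
      · rintro ⟨hs0, hs⟩
        exact ⟨(ENNReal.ofReal_lt_iff_lt_toReal hs0.le ha).2 hs, hs0⟩
    rw [Measure.restrict_apply (measurableSet_lt ENNReal.measurable_ofReal measurable_const),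
      this, Real.volume_Ioo, sub_zero, ENNReal.ofReal_toReal ha]
  calc ∫⁻ x, φ x ∂μ
      = ∫⁻ x, volume.restrict (Ioi 0) (Prod.mk x ⁻¹' {p | ENNReal.ofReal p.2 < φ p.1}) ∂μ := by
        simp only [preimage_ofPred_eq, volume_level]
    _ = ∫⁻ s in Ioi (0 : ℝ), μ {x | ENNReal.ofReal s < φ x} := by
        rw [← Measure.prod_apply hE, Measure.prod_apply_symm hE]
        rfl

namespace Real

theorem volume_add_volume_le_volume_add_of_isCompact {K L : Set ℝ} (hK : IsCompact K)
    (hL : IsCompact L) (hK₀ : K.Nonempty) (hL₀ : L.Nonempty) :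
    volume K + volume L ≤ volume (K + L) := by
  set k := sSup K
  set l := sInf L
  have hk : k ∈ K := hK.sSup_mem hK₀
  have hl : l ∈ L := hL.sInf_mem hL₀
  have hleft : K + {l} ⊆ (K + L) ∩ Iic (k + l) := by
    rintro _ ⟨a, ha, _, rfl, rfl⟩
    exact ⟨add_mem_add ha hl, by simpa using le_csSup hK.bddAbove ha⟩
  have hright : ({k} + L) \ {k + l} ⊆ (K + L) \ Iic (k + l) := by
    rintro _ ⟨⟨_, rfl, b, hb, rfl⟩, hne⟩
    refine ⟨add_mem_add hk hb, ?_⟩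
    have : l < b := (csInf_le hL.bddBelow hb).lt_of_ne (by rintro rfl; exact hne rfl)
    simpa using this
  calc volume K + volume L = volume (K + {l}) + volume (({k} + L) \ {k + l}) := by
        rw [measure_sdiff_null (measure_singleton _), add_singleton, singleton_add,
          image_add_right, image_add_left, measure_preimage_add_right, measure_preimage_add]
    _ ≤ volume ((K + L) ∩ Iic (k + l)) + volume ((K + L) \ Iic (k + l)) := by
        gcongr
    _ = volume (K + L) := measure_inter_add_sdiff _ measurableSet_Iic

theorem volume_add_volume_le_volume_add {U V : Set ℝ} (hU : MeasurableSet U)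
    (hV : MeasurableSet V) (hU₀ : U.Nonempty) (hV₀ : V.Nonempty) :
    volume U + volume V ≤ volume (U + V) := by
  obtain ⟨u, hu⟩ := hU₀
  obtain ⟨v, hv⟩ := hV₀
  have compact_le (K L : Set ℝ) (hKU : K ⊆ U) (hK : IsCompact K) (hLV : L ⊆ V) (hL : IsCompact L) :
      volume K + volume L ≤ volume (U + V) := calc
    volume K + volume L ≤ volume (insert u K) + volume (insert v L) := by
      gcongr <;> exact subset_insert _ _
    _ ≤ volume (insert u K + insert v L) :=
      volume_add_volume_le_volume_add_of_isCompact (hK.insert u) (hL.insert v)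
        (insert_nonempty _ _) (insert_nonempty _ _)
    _ ≤ volume (U + V) := by gcongr <;> exact insert_subset ‹_› ‹_›
  rw [hU.measure_eq_iSup_isCompact, hV.measure_eq_iSup_isCompact]
  simp only [iSup_and']
  exact ENNReal.biSup_add_biSup_le' ⟨∅, empty_subset _, isCompact_empty⟩
    ⟨∅, empty_subset _, isCompact_empty⟩ fun K hK L hL => compact_le K L hK.1 hK.2 hL.1 hL.2

theorem ofReal_mul_volume_add_le_volume_smul_add {a b : ℝ} (ha : 0 ≤ a) (hb : 0 ≤ b)
    {U V : Set ℝ} (hU : MeasurableSet U) (hV : MeasurableSet V)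
    (hU₀ : U.Nonempty) (hV₀ : V.Nonempty) :
    ENNReal.ofReal a * volume U + ENNReal.ofReal b * volume V ≤ volume (a • U + b • V) := by
  simpa [Measure.addHaar_smul, abs_of_nonneg, ha, hb] using
    volume_add_volume_le_volume_add (hU.const_smul₀ a) (hV.const_smul₀ b) hU₀.smul_set
      hV₀.smul_set

theorem smul_setOf_lt_add_smul_setOf_lt_subset {f g h : ℝ → ℝ≥0∞} {t : ℝ}
    (ht : t ∈ Ioo (0 : ℝ) 1) (hfgh : ∀ x y, f x ^ t * g y ^ (1 - t) ≤ h (t * x + (1 - t) * y))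
    (a b : ℝ≥0∞) :
    t • {x | a < f x} + (1 - t) • {x | b < g x} ⊆ {x | a ^ t * b ^ (1 - t) < h x} := by
  rintro _ ⟨_, ⟨x, hx, rfl⟩, _, ⟨y, hy, rfl⟩, rfl⟩
  exact (ENNReal.mul_lt_mul (ENNReal.rpow_lt_rpow hx ht.1)
    (ENNReal.rpow_lt_rpow hy (sub_pos.2 ht.2))).trans_le (hfgh x y)

theorem prekopa_leindler_add_of_iSup_eq {f g h : ℝ → ℝ≥0∞} {t : ℝ} (ht : t ∈ Ioo (0 : ℝ) 1)
    (hf : Measurable f) (hg : Measurable g) (hh : Measurable h)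
    (hfgh : ∀ x y, f x ^ t * g y ^ (1 - t) ≤ h (t * x + (1 - t) * y))
    (hsup : ⨆ x, f x = ⨆ x, g x) :
    ENNReal.ofReal t * (∫⁻ x, f x) + ENNReal.ofReal (1 - t) * ∫⁻ x, g x ≤ ∫⁻ x, h x := by
  have level (s : ℝ) : ENNReal.ofReal t * volume {x | ENNReal.ofReal s < f x}
      + ENNReal.ofReal (1 - t) * volume {x | ENNReal.ofReal s < g x}
      ≤ volume {x | ENNReal.ofReal s < h x} := by
    set c := ENNReal.ofReal s
    -- as `f` and `g` have the same supremum, their superlevel sets are nonempty or empty together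
    by_cases hc : c < ⨆ x, f x
    · calc _ ≤ volume (t • {x | c < f x} + (1 - t) • {x | c < g x}) :=
            ofReal_mul_volume_add_le_volume_smul_add ht.1.le (sub_pos.2 ht.2).le
              (measurableSet_lt measurable_const hf) (measurableSet_lt measurable_const hg)
              (lt_iSup_iff.1 hc) (lt_iSup_iff.1 (hsup ▸ hc : c < ⨆ x, g x))
        _ ≤ volume {x | c ^ t * c ^ (1 - t) < h x} :=
            measure_mono (smul_setOf_lt_add_smul_setOf_lt_subset ht hfgh c c)
        _ = volume {x | c < h x} := by
            rw [← ENNReal.rpow_add_of_nonneg _ _ ht.1.le (sub_pos.2 ht.2).le, add_sub_cancel,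
              ENNReal.rpow_one]
    · have hf_le (x : ℝ) : f x ≤ c := (le_iSup f x).trans (not_lt.1 hc)
      have hg_le (x : ℝ) : g x ≤ c := (le_iSup g x).trans (hsup ▸ not_lt.1 hc)
      simp [(hf_le _).not_gt, (hg_le _).not_gt]
  calc ENNReal.ofReal t * (∫⁻ x, f x) + ENNReal.ofReal (1 - t) * ∫⁻ x, g x
      = ENNReal.ofReal t * (∫⁻ s in Ioi 0, volume {x | ENNReal.ofReal s < f x})
        + ENNReal.ofReal (1 - t) * ∫⁻ s in Ioi 0, volume {x | ENNReal.ofReal s < g x} := by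
        rw [lintegral_eq_lintegral_measure_ofReal_lt hf,
          lintegral_eq_lintegral_measure_ofReal_lt hg]
    _ ≤ ∫⁻ s in Ioi 0, (ENNReal.ofReal t * volume {x | ENNReal.ofReal s < f x}
        + ENNReal.ofReal (1 - t) * volume {x | ENNReal.ofReal s < g x}) :=
        (add_le_add (lintegral_const_mul_le _ _) (lintegral_const_mul_le _ _)).trans
          (le_lintegral_add _ _)
    _ ≤ ∫⁻ s in Ioi 0, volume {x | ENNReal.ofReal s < h x} := lintegral_mono level
    _ = ∫⁻ x, h x := (lintegral_eq_lintegral_measure_ofReal_lt hh).symm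

theorem prekopa_leindler {f g h : ℝ → ℝ≥0∞} {t : ℝ} (ht : t ∈ Ioo (0 : ℝ) 1)
    (hf : Measurable f) (hg : Measurable g) (hh : Measurable h)
    (hfgh : ∀ x y, f x ^ t * g y ^ (1 - t) ≤ h (t * x + (1 - t) * y))
    (hf_top : ⨆ x, f x ≠ ∞) (hg_top : ⨆ x, g x ≠ ∞) :
    (∫⁻ x, f x) ^ t * (∫⁻ x, g x) ^ (1 - t) ≤ ∫⁻ x, h x := by
  have ht' : 0 < 1 - t := sub_pos.2 ht.2
  set MA := ⨆ x, f x
  set MB := ⨆ x, g x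
  rcases eq_or_ne MA 0 with hA | hA
  · have : f = 0 := funext fun x => nonpos_iff_eq_zero.1 (hA ▸ le_iSup f x)
    simp [this, ht.1]
  rcases eq_or_ne MB 0 with hB | hB
  · have : g = 0 := funext fun x => nonpos_iff_eq_zero.1 (hB ▸ le_iSup g x)
    simp [this, ht']
  set M := MA ^ t * MB ^ (1 - t)
  have hM : M ≠ 0 := by simp [M, hA, hB, hf_top, hg_top, ht.1, ht']
  have hM_top : M ≠ ∞ := ENNReal.mul_ne_top (ENNReal.rpow_ne_top_of_nonneg ht.1.le hf_top)
    (ENNReal.rpow_ne_top_of_nonneg ht'.le hg_top)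
  -- rescaling `f` and `g` to the common supremum `M` does not change the geometric mean
  set cA := M / MA
  set cB := M / MB
  have hc : cA ^ t * cB ^ (1 - t) = 1 := by
    rw [ENNReal.div_rpow_of_nonneg _ _ ht.1.le, ENNReal.div_rpow_of_nonneg _ _ ht'.le,
      div_eq_mul_inv, div_eq_mul_inv, mul_mul_mul_comm,
      ← ENNReal.rpow_add_of_nonneg _ _ ht.1.le ht'.le, add_sub_cancel, ENNReal.rpow_one,
      ← ENNReal.mul_inv (.inr (ENNReal.rpow_ne_top_of_nonneg ht'.le hg_top))
        (.inl (ENNReal.rpow_ne_top_of_nonneg ht.1.le hf_top)),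
      ← div_eq_mul_inv, ENNReal.div_self hM hM_top]
  have mean_eq (u v : ℝ≥0∞) : (cA * u) ^ t * (cB * v) ^ (1 - t) = u ^ t * v ^ (1 - t) := by
    rw [ENNReal.mul_rpow_of_nonneg _ _ ht.1.le, ENNReal.mul_rpow_of_nonneg _ _ ht'.le,
      mul_mul_mul_comm, hc, one_mul]
  have hsup : ⨆ x, cA * f x = ⨆ x, cB * g x := by
    rw [← ENNReal.mul_iSup, ← ENNReal.mul_iSup, ENNReal.div_mul_cancel hA hf_top,
      ENNReal.div_mul_cancel hB hg_top]
  calc (∫⁻ x, f x) ^ t * (∫⁻ x, g x) ^ (1 - t)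
      = (∫⁻ x, cA * f x) ^ t * (∫⁻ x, cB * g x) ^ (1 - t) := by
        rw [lintegral_const_mul _ hf, lintegral_const_mul _ hg, mean_eq]
    _ ≤ ENNReal.ofReal t * (∫⁻ x, cA * f x) + ENNReal.ofReal (1 - t) * ∫⁻ x, cB * g x :=
        ENNReal.rpow_mul_rpow_one_sub_le ht _ _
    _ ≤ ∫⁻ x, h x := prekopa_leindler_add_of_iSup_eq ht (hf.const_mul _) (hg.const_mul _) hh
        (fun x y => (mean_eq _ _).trans_le (hfgh x y)) hsup

end Real

def SatisfiesBrunnMinkowski {E : Type*} [AddCommGroup E] [Module ℝ E] [TopologicalSpace E]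
    [MeasurableSpace E] (μ : Measure E) : Prop :=
  ∀ C D : Set E, IsCompact C → IsCompact D → C.Nonempty → D.Nonempty → ∀ t ∈ Ioo (0 : ℝ) 1,
    μ C ^ t * μ D ^ (1 - t) ≤ μ (t • C + (1 - t) • D)

theorem IsCompact.slice {F : Type*} [TopologicalSpace F] {A : Set (ℝ × F)} (hA : IsCompact A)
    (x : ℝ) : IsCompact {y | (x, y) ∈ A} :=
  (Topology.IsClosedEmbedding.isProperMap ⟨isEmbedding_prodMkRight x,
    (isClosedMap_prodMk_left x).isClosed_range⟩).isCompact_preimage hA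

section Slices

variable {F : Type*} [AddCommGroup F] [Module ℝ F]

theorem smul_slice_add_smul_slice_subset (A B : Set (ℝ × F)) (t s x y : ℝ) :
    t • {z | (x, z) ∈ A} + s • {z | (y, z) ∈ B} ⊆ {z | (t * x + s * y, z) ∈ t • A + s • B} := by
  rintro _ ⟨_, ⟨a, ha, rfl⟩, _, ⟨b, hb, rfl⟩, rfl⟩
  exact ⟨t • (x, a), smul_mem_smul_set ha, s • (y, b), smul_mem_smul_set hb, by simp⟩

variable [TopologicalSpace F] [MeasurableSpace F] {ν : Measure F}

theorem SatisfiesBrunnMinkowski.slice (hν : SatisfiesBrunnMinkowski ν) {A B : Set (ℝ × F)}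
    (hA : IsCompact A) (hB : IsCompact B) {t : ℝ} (ht : t ∈ Ioo (0 : ℝ) 1) (x y : ℝ) :
    ν {z | (x, z) ∈ A} ^ t * ν {z | (y, z) ∈ B} ^ (1 - t)
      ≤ ν {z | (t * x + (1 - t) * y, z) ∈ t • A + (1 - t) • B} := by
  rcases eq_empty_or_nonempty {z | (x, z) ∈ A} with hAx | hAx
  · simp [hAx, ht.1]
  rcases eq_empty_or_nonempty {z | (y, z) ∈ B} with hBy | hBy
  · simp [hBy, ht.2]
  exact (hν _ _ (hA.slice x) (hB.slice y) hAx hBy t ht).trans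
    (measure_mono (smul_slice_add_smul_slice_subset A B t (1 - t) x y))

end Slices

theorem SatisfiesBrunnMinkowski.prod {F : Type*} [NormedAddCommGroup F] [NormedSpace ℝ F]
    [MeasurableSpace F] [BorelSpace F] [SecondCountableTopology F] {ν : Measure F} [SFinite ν]
    [IsFiniteMeasureOnCompacts ν] (hν : SatisfiesBrunnMinkowski ν) :
    SatisfiesBrunnMinkowski ((volume : Measure ℝ).prod ν) := by
  have measure_eq {K : Set (ℝ × F)} (hK : IsCompact K) :
      (volume.prod ν) K = ∫⁻ x, ν {y | (x, y) ∈ K} :=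
    Measure.prod_apply hK.measurableSet
  have iSup_ne_top {K : Set (ℝ × F)} (hK : IsCompact K) : ⨆ x, ν {y | (x, y) ∈ K} ≠ ∞ :=
    ((iSup_le fun x => measure_mono (fun y hy => ⟨(x, y), hy, rfl⟩ :
      {y | (x, y) ∈ K} ⊆ Prod.snd '' K)).trans_lt
      (hK.image continuous_snd).measure_lt_top).ne
  intro C D hC hD _ _ t ht
  have hS : IsCompact (t • C + (1 - t) • D) := (hC.smul t).add (hD.smul (1 - t))
  rw [measure_eq hC, measure_eq hD, measure_eq hS]
  exact Real.prekopa_leindler ht (measurable_measure_prodMk_left hC.measurableSet)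
    (measurable_measure_prodMk_left hD.measurableSet)
    (measurable_measure_prodMk_left hS.measurableSet) (hν.slice hC hD ht)
    (iSup_ne_top hC) (iSup_ne_top hD)

theorem SatisfiesBrunnMinkowski.of_continuousLinearEquiv {E E' : Type*} [AddCommGroup E]
    [Module ℝ E] [TopologicalSpace E] [MeasurableSpace E] [AddCommGroup E'] [Module ℝ E']
    [TopologicalSpace E'] [IsTopologicalAddGroup E'] [ContinuousSMul ℝ E'] [T2Space E']
    [MeasurableSpace E'] [OpensMeasurableSpace E'] {μ : Measure E} {μ' : Measure E'}
    (hμ : SatisfiesBrunnMinkowski μ) (e : E ≃L[ℝ] E') (he : MeasurePreserving e μ μ') :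
    SatisfiesBrunnMinkowski μ' := by
  have measure_eq {K : Set E'} (hK : IsCompact K) : μ (e ⁻¹' K) = μ' K :=
    he.measure_preimage hK.measurableSet.nullMeasurableSet
  have compact_preimage {K : Set E'} (hK : IsCompact K) : IsCompact (e ⁻¹' K) :=
    e.toHomeomorph.isCompact_preimage.2 hK
  intro C D hC hD hC₀ hD₀ t ht
  have hsub : t • e ⁻¹' C + (1 - t) • e ⁻¹' D ⊆ e ⁻¹' (t • C + (1 - t) • D) := by
    rintro _ ⟨_, ⟨a, ha, rfl⟩, _, ⟨b, hb, rfl⟩, rfl⟩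
    exact ⟨_, smul_mem_smul_set ha, _, smul_mem_smul_set hb, by simp⟩
  calc μ' C ^ t * μ' D ^ (1 - t) = μ (e ⁻¹' C) ^ t * μ (e ⁻¹' D) ^ (1 - t) := by
        rw [measure_eq hC, measure_eq hD]
    _ ≤ μ (t • e ⁻¹' C + (1 - t) • e ⁻¹' D) :=
        hμ _ _ (compact_preimage hC) (compact_preimage hD) (hC₀.preimage e.surjective)
          (hD₀.preimage e.surjective) t ht
    _ ≤ μ' (t • C + (1 - t) • D) :=
        (measure_mono hsub).trans_eq (measure_eq ((hC.smul t).add (hD.smul (1 - t))))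

theorem satisfiesBrunnMinkowski_of_subsingleton {E : Type*} [AddCommGroup E] [Module ℝ E]
    [TopologicalSpace E] [MeasurableSpace E] [Subsingleton E] (μ : Measure E) :
    SatisfiesBrunnMinkowski μ := by
  intro C D _ _ hC₀ hD₀ t ht
  rw [(hC₀.smul_set.add hD₀.smul_set).eq_univ, hC₀.eq_univ, hD₀.eq_univ,
    ← ENNReal.rpow_add_of_nonneg _ _ ht.1.le (sub_pos.2 ht.2).le, add_sub_cancel, ENNReal.rpow_one]

theorem satisfiesBrunnMinkowski_volume_pi :
    ∀ n : ℕ, SatisfiesBrunnMinkowski (volume : Measure (Fin n → ℝ))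
  | 0 => satisfiesBrunnMinkowski_of_subsingleton _
  | n + 1 => by
    have he : MeasurePreserving (Fin.consEquivL ℝ fun _ : Fin (n + 1) => ℝ)
        ((volume : Measure ℝ).prod volume) volume := by
      have hfun : ⇑(Fin.consEquivL ℝ fun _ : Fin (n + 1) => ℝ)
          = (MeasurableEquiv.piFinSuccAbove (fun _ : Fin (n + 1) => ℝ) 0).symm := by
        funext p
        exact (Fin.insertNth_zero' p.1 p.2).symm
      rw [hfun, ← Measure.volume_eq_prod]
      exact (volume_preserving_piFinSuccAbove _ 0).symm
    exact (satisfiesBrunnMinkowski_volume_pi n).prod.of_continuousLinearEquiv _ he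

theorem stmt6_general (n : ℕ) (A B : Set (ℝ × (Fin n → ℝ))) (t : ℝ) (ht : t ∈ Set.Ioo (0:ℝ) 1)
    (hA : IsCompact A) (hB : IsCompact B)
    (lam γ γt : ℝ) (hγ : 0 < γ) (hγt : 0 < γt)
    (hnorm : γ ^ t * γt ^ (1 - t) = 1) :
    t • {x : ℝ | ENNReal.ofReal (γ * lam) < volume {y | (x, y) ∈ A}}
      + (1 - t) • {x : ℝ | ENNReal.ofReal (γt * lam) < volume {y | (x, y) ∈ B}}
    ⊆ {x : ℝ | ENNReal.ofReal lam < volume {y | (x, y) ∈ t • A + (1 - t) • B}} := by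
  have ht₀ : 0 ≤ t := ht.1.le
  have ht₁ : 0 ≤ 1 - t := (sub_pos.2 ht.2).le
  have hlevel : ENNReal.ofReal (γ * lam) ^ t * ENNReal.ofReal (γt * lam) ^ (1 - t)
      = ENNReal.ofReal lam := by
    rw [ENNReal.ofReal_mul hγ.le, ENNReal.ofReal_mul hγt.le, ENNReal.mul_rpow_of_nonneg _ _ ht₀,
      ENNReal.mul_rpow_of_nonneg _ _ ht₁, mul_mul_mul_comm,
      ← ENNReal.rpow_add_of_nonneg _ _ ht₀ ht₁, add_sub_cancel, ENNReal.rpow_one,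
      ENNReal.ofReal_rpow_of_nonneg hγ.le ht₀, ENNReal.ofReal_rpow_of_nonneg hγt.le ht₁,
      ← ENNReal.ofReal_mul (by positivity), hnorm, ENNReal.ofReal_one, one_mul]
  rw [← hlevel]
  exact Real.smul_setOf_lt_add_smul_setOf_lt_subset ht
    ((satisfiesBrunnMinkowski_volume_pi n).slice hA hB ht) _ _

theorem stmt6 (n : ℕ) (A B : Set (ℝ × (Fin n → ℝ))) (t : ℝ) (ht : t ∈ Set.Ioo (0:ℝ) 1)
    (hA : IsCompact A) (hB : IsCompact B)
    (lam γ γt : ℝ) (hlam : 0 < lam) (hγ : 0 < γ) (hγt : 0 < γt)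
    (hnorm : γ ^ t * γt ^ (1 - t) = 1)
    (hAne : {x : ℝ | ENNReal.ofReal (γ * lam) < volume {y | (x, y) ∈ A}}.Nonempty)
    (hBne : {x : ℝ | ENNReal.ofReal (γt * lam) < volume {y | (x, y) ∈ B}}.Nonempty) :
    t • {x : ℝ | ENNReal.ofReal (γ * lam) < volume {y | (x, y) ∈ A}}
      + (1 - t) • {x : ℝ | ENNReal.ofReal (γt * lam) < volume {y | (x, y) ∈ B}}
    ⊆ {x : ℝ | ENNReal.ofReal lam < volume {y | (x, y) ∈ t • A + (1 - t) • B}} :=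
  stmt6_general n A B t ht hA hB lam γ γt hγ hγt hnorm
end

section
/- Let A, B ⊆ ℝ^d be compact, t ∈ (0,1), and suppose A contains a slice {x₀} × E with E ⊆ ℝ^{d-1} compact of measure |E| ≥ 1/2. If |tA + (1-t)B| < 1 + δ with δ ≤ 1, then the one-dimensional measure of the projection π(B) of B to the first coordinate satisfies |π(B)| ≤ 2·(1+δ)/((1-t)·t^{d-1}·|E|) ≤ 4/((1-t)t^{d-1}). -/
open MeasureTheory Set
open scoped Pointwise ENNReal

/-!
If `A ⊇ {x₀} × E` and `b ∈ B`, then the slice of `tA + (1-t)B` over `t x₀ + (1-t) b.1` contains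
the translate `(1-t) b.2 + tE`, of measure `t^{d-1}|E|`. These points `t x₀ + (1-t) b.1` fill an
affine copy of `π(B)` of length `(1-t)|π(B)|`, so Fubini gives
`(1-t) t^{d-1} |E| |π(B)| ≤ |tA + (1-t)B| < 1 + δ`, and both bounds follow from `|E| ≥ 1/2`, `δ ≤ 1`.
The Fubini bound needs no measurability: pass to a measurable hull of the sum set and apply
Markov's inequality to its slice measures.
-/

theorem mul_measure_le_prod_apply_of_le_measure_slice {α β : Type*} [MeasurableSpace α]
    [MeasurableSpace β] {μ : Measure α} {ν : Measure β} [SFinite ν] {S : Set (α × β)}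
    {Q : Set α} {c : ℝ≥0∞} (h : ∀ x ∈ Q, c ≤ ν (Prod.mk x ⁻¹' S)) :
    c * μ Q ≤ μ.prod ν S := by
  set S' := toMeasurable (μ.prod ν) S
  have hS' : MeasurableSet S' := measurableSet_toMeasurable _ _
  have hQ : Q ⊆ {x | c ≤ ν (Prod.mk x ⁻¹' S')} := fun x hx =>
    (h x hx).trans (measure_mono (preimage_mono (subset_toMeasurable _ _)))
  calc c * μ Q ≤ c * μ {x | c ≤ ν (Prod.mk x ⁻¹' S')} := by gcongr
    _ ≤ ∫⁻ x, ν (Prod.mk x ⁻¹' S') ∂μ :=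
      mul_meas_ge_le_lintegral (measurable_measure_prodMk_left hS') c
    _ = μ.prod ν S' := (Measure.prod_apply hS').symm
    _ = μ.prod ν S := measure_toMeasurable S

theorem vadd_smul_subset_preimage_mk_add_smul {R M N : Type*} [AddCommMonoid M]
    [AddCommMonoid N] [SMul R M] [SMul R N] {A B : Set (M × N)} {x₀ : M} {E : Set N}
    (hE : ({x₀} : Set M) ×ˢ E ⊆ A) {b : M × N} (hb : b ∈ B) (t s : R) :
    (s • b.2) +ᵥ t • E ⊆ Prod.mk (t • x₀ + s • b.1) ⁻¹' (t • A + s • B) := by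
  rintro _ ⟨_, ⟨e, he, rfl⟩, rfl⟩
  have hmem := add_mem_add (smul_mem_smul_set (a := t) (hE (mk_mem_prod rfl he)))
    (smul_mem_smul_set (a := s) hb)
  show (t • x₀ + s • b.1, s • b.2 + t • e) ∈ t • A + s • B
  rw [add_comm (s • b.2)]
  exact hmem

theorem volume_fst_image_mul_le_volume_add_smul {F : Type*} [NormedAddCommGroup F]
    [NormedSpace ℝ F] [FiniteDimensional ℝ F] [MeasureSpace F] [BorelSpace F]
    [(volume : Measure F).IsAddHaarMeasure] {A B : Set (ℝ × F)} {x₀ : ℝ} {E : Set F}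
    (hE : ({x₀} : Set ℝ) ×ˢ E ⊆ A) (t s : ℝ) :
    ENNReal.ofReal |s| * volume (Prod.fst '' B) *
        (ENNReal.ofReal (|t| ^ Module.finrank ℝ F) * volume E) ≤
      volume (t • A + s • B) := by
  have hslice : ∀ x ∈ (t • x₀) +ᵥ s • Prod.fst '' B,
      ENNReal.ofReal (|t| ^ Module.finrank ℝ F) * volume E ≤
        volume (Prod.mk x ⁻¹' (t • A + s • B)) := by
    rintro _ ⟨_, ⟨_, ⟨b, hb, rfl⟩, rfl⟩, rfl⟩
    calc ENNReal.ofReal (|t| ^ Module.finrank ℝ F) * volume E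
        = volume ((s • b.2) +ᵥ t • E) := by rw [measure_vadd, Measure.addHaar_smul, abs_pow]
      _ ≤ _ := measure_mono (vadd_smul_subset_preimage_mk_add_smul hE hb t s)
  calc ENNReal.ofReal |s| * volume (Prod.fst '' B) *
        (ENNReal.ofReal (|t| ^ Module.finrank ℝ F) * volume E)
      = ENNReal.ofReal (|t| ^ Module.finrank ℝ F) * volume E *
          volume ((t • x₀) +ᵥ s • Prod.fst '' B) := by
        rw [measure_vadd, Measure.addHaar_smul, Module.finrank_self, pow_one, mul_comm]
    _ ≤ volume (t • A + s • B) := by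
        rw [Measure.volume_eq_prod]
        exact mul_measure_le_prod_apply_of_le_measure_slice hslice

theorem stmt9_general (n : ℕ) (A B : Set (ℝ × (Fin n → ℝ))) (t : ℝ) (ht : t ∈ Set.Ioo (0:ℝ) 1)
    (x₀ : ℝ) (E : Set (Fin n → ℝ))
    (hEsub : ({x₀} : Set ℝ) ×ˢ E ⊆ A)
    (hEvol : (1:ℝ)/2 ≤ (volume E).toReal)
    (δ : ℝ) (hδ1 : δ ≤ 1)
    (hsum : volume (t • A + (1 - t) • B) < ENNReal.ofReal (1 + δ)) :
    (volume (Prod.fst '' B)).toReal ≤ 2 * (1 + δ) / ((1 - t) * t ^ n * (volume E).toReal) ∧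
    (volume (Prod.fst '' B)).toReal ≤ 4 / ((1 - t) * t ^ n) := by
  obtain ⟨ht0, ht1⟩ := ht
  have hs : 0 < 1 - t := sub_pos.2 ht1
  have hlt := (volume_fst_image_mul_le_volume_add_smul (B := B) hEsub t (1 - t)).trans_lt hsum
  rw [Module.finrank_fin_fun, abs_of_pos ht0, abs_of_pos hs] at hlt
  have hreal :
      (1 - t) * (volume (Prod.fst '' B)).toReal * (t ^ n * (volume E).toReal) < 1 + δ := by
    simpa [ENNReal.toReal_mul, ENNReal.toReal_ofReal hs.le,
      ENNReal.toReal_ofReal (pow_nonneg ht0.le n)] using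
      (ENNReal.lt_ofReal_iff_toReal_lt hlt.ne_top).1 hlt
  have hE : 0 ≤ (volume E).toReal := ENNReal.toReal_nonneg
  have hprod : 0 ≤ (1 - t) * t ^ n * (volume (Prod.fst '' B)).toReal := by positivity
  constructor
  · rw [le_div_iff₀ (by positivity)]
    nlinarith [mul_nonneg hprod hE]
  · rw [le_div_iff₀ (by positivity)]
    nlinarith

theorem stmt9 (n : ℕ) (A B : Set (ℝ × (Fin n → ℝ))) (t : ℝ) (ht : t ∈ Set.Ioo (0:ℝ) 1)
    (hA : IsCompact A) (hB : IsCompact B)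
    (x₀ : ℝ) (E : Set (Fin n → ℝ)) (hE : IsCompact E)
    (hEsub : ({x₀} : Set ℝ) ×ˢ E ⊆ A)
    (hEvol : (1:ℝ)/2 ≤ (volume E).toReal)
    (δ : ℝ) (hδ0 : 0 < δ) (hδ1 : δ ≤ 1)
    (hsum : volume (t • A + (1 - t) • B) < ENNReal.ofReal (1 + δ)) :
    (volume (Prod.fst '' B)).toReal ≤ 2 * (1 + δ) / ((1 - t) * t ^ n * (volume E).toReal) ∧
    (volume (Prod.fst '' B)).toReal ≤ 4 / ((1 - t) * t ^ n) :=
  stmt9_general n A B t ht x₀ E hEsub hEvol δ hδ1 hsum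
end

section
/- Let A, B ⊆ ℝ^d be compact sets, t ∈ (0,1), S = tA + (1-t)B. Define φ(s) = |{x : |S_x| > s}| − t|{x : |A_x| > s}| − (1-t)|{x : |B_x| > s}|. If s < min(‖A‖_∞, ‖B‖_∞), where ‖A‖_∞ = max_x |A_x|, then φ(s) ≥ 0. -/
open MeasureTheory Set
open scoped Pointwise ENNReal

/-!
If `|A_x| > s` and `|B_y| > s`, the slice of `S = t A + (1 - t) B` over `t x + (1 - t) y` contains
`t A_x + (1 - t) B_y`, whose volume is at least `|A_x|^t |B_y|^(1-t) ≥ min (|A_x|, |B_y|) > s`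
by the multiplicative Brunn–Minkowski inequality in `ℝ^(d-1)`. Hence `{|S_·| > s}` contains
`t {|A_·| > s} + (1 - t) {|B_·| > s}`, and the one-dimensional Brunn–Minkowski inequality concludes.

Multiplicative Brunn–Minkowski follows by induction on the dimension from the one-dimensional
Prékopa–Leindler inequality, which is the same superlevel set argument integrated over the levels
by the layer-cake formula, after rescaling the functions to have supremum one.
-/

theorem ENNReal.rpow_mul_rpow_le_add (a b : ℝ≥0∞) {t : ℝ} (ht : t ∈ Ioo 0 1) :
    a ^ t * b ^ (1 - t) ≤ ENNReal.ofReal t * a + ENNReal.ofReal (1 - t) * b := by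
  have ht' : 0 < 1 - t := sub_pos.2 ht.2
  have h := ENNReal.young_inequality (a ^ t) (b ^ (1 - t))
    (Real.HolderConjugate.inv_inv ht.1 ht' (by ring))
  rwa [← ENNReal.rpow_mul, ← ENNReal.rpow_mul, mul_inv_cancel₀ ht.1.ne', mul_inv_cancel₀ ht'.ne',
    ENNReal.rpow_one, ENNReal.rpow_one, ENNReal.ofReal_inv_of_pos ht.1,
    ENNReal.ofReal_inv_of_pos ht', div_eq_mul_inv, div_eq_mul_inv, inv_inv, inv_inv, mul_comm a,
    mul_comm b] at h

theorem ENNReal.min_le_rpow_mul_rpow (a b : ℝ≥0∞) {t : ℝ} (ht : t ∈ Ioo 0 1) :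
    min a b ≤ a ^ t * b ^ (1 - t) :=
  calc min a b = min a b ^ (t + (1 - t)) := by rw [add_sub_cancel, ENNReal.rpow_one]
    _ = min a b ^ t * min a b ^ (1 - t) :=
      ENNReal.rpow_add_of_nonneg _ _ ht.1.le (sub_nonneg.2 ht.2.le)
    _ ≤ a ^ t * b ^ (1 - t) := mul_le_mul' (ENNReal.rpow_le_rpow (min_le_left a b) ht.1.le)
      (ENNReal.rpow_le_rpow (min_le_right a b) (sub_nonneg.2 ht.2.le))

theorem Real.volume_add_volume_le_volume_add_of_isCompact_s10 {K L : Set ℝ} (hK : IsCompact K)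
    (hL : IsCompact L) (hK₀ : K.Nonempty) (hL₀ : L.Nonempty) :
    volume K + volume L ≤ volume (K + L) := by
  set a := sSup K
  set b := sInf L
  have ha : a ∈ K := hK.sSup_mem hK₀
  have hb : b ∈ L := hL.sInf_mem hL₀
  -- `K + b` and `a + L` both lie in `K + L`, and overlap only at `a + b`
  have hinter : (K + {b}) ∩ ({a} + L) ⊆ {a + b} := by
    rintro _ ⟨⟨k, hk, _, rfl, rfl⟩, ⟨_, rfl, l, hl, hkl⟩⟩
    have : k = a := by linarith [le_csSup hK.bddAbove hk, csInf_le hL.bddBelow hl]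
    simp [this]
  calc volume K + volume L = volume (K + {b}) + volume ({a} + L) := by simp
    _ = volume ((K + {b}) ∪ ({a} + L)) + volume ((K + {b}) ∩ ({a} + L)) :=
      (measure_union_add_inter _ (isCompact_singleton.add hL).measurableSet).symm
    _ = volume ((K + {b}) ∪ ({a} + L)) := by
      rw [measure_mono_null hinter (measure_singleton _), add_zero]
    _ ≤ volume (K + L) := measure_mono <| union_subset
      (add_subset_add_left (singleton_subset_iff.2 hb))
      (add_subset_add_right (singleton_subset_iff.2 ha))

theorem Real.volume_add_volume_le_volume_add_s10 {U V : Set ℝ} (hU : MeasurableSet U)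
    (hV : MeasurableSet V) (hU₀ : U.Nonempty) (hV₀ : V.Nonempty) :
    volume U + volume V ≤ volume (U + V) := by
  obtain ⟨u, hu⟩ := hU₀
  obtain ⟨v, hv⟩ := hV₀
  rw [hU.measure_eq_iSup_isCompact, hV.measure_eq_iSup_isCompact]
  simp_rw [iSup_and']
  refine ENNReal.biSup_add_biSup_le' ⟨∅, empty_subset _, isCompact_empty⟩
    ⟨∅, empty_subset _, isCompact_empty⟩ fun K ⟨hKU, hK⟩ L ⟨hLV, hL⟩ => ?_
  calc volume K + volume L ≤ volume (insert u K) + volume (insert v L) := by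
        gcongr <;> exact subset_insert _ _
    _ ≤ volume (insert u K + insert v L) :=
      Real.volume_add_volume_le_volume_add_of_isCompact_s10 (hK.insert u) (hL.insert v)
        (insert_nonempty _ _) (insert_nonempty _ _)
    _ ≤ volume (U + V) :=
      measure_mono (add_subset_add (insert_subset hu hKU) (insert_subset hv hLV))

theorem Real.ofReal_mul_volume_add_ofReal_mul_volume_le {U V : Set ℝ} (hU : MeasurableSet U)
    (hV : MeasurableSet V) (hU₀ : U.Nonempty) (hV₀ : V.Nonempty) {t : ℝ} (ht : t ∈ Ioo 0 1) :
    ENNReal.ofReal t * volume U + ENNReal.ofReal (1 - t) * volume V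
      ≤ volume (t • U + (1 - t) • V) := by
  simpa [Measure.addHaar_smul_of_nonneg volume ht.1.le,
    Measure.addHaar_smul_of_nonneg volume (sub_nonneg.2 ht.2.le)] using
    Real.volume_add_volume_le_volume_add_s10 (hU.const_smul₀ t) (hV.const_smul₀ (1 - t))
      hU₀.smul_set hV₀.smul_set

theorem Real.ofReal_mul_volume_lt_add_ofReal_mul_volume_lt_le {f g h : ℝ → ℝ≥0∞}
    (hf : Measurable f) (hg : Measurable g) {t : ℝ} (ht : t ∈ Ioo 0 1)
    (hfgh : ∀ x y, min (f x) (g y) ≤ h (t • x + (1 - t) • y)) {r : ℝ≥0∞}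
    (hrf : r < ⨆ x, f x) (hrg : r < ⨆ y, g y) :
    ENNReal.ofReal t * volume {x | r < f x} + ENNReal.ofReal (1 - t) * volume {y | r < g y}
      ≤ volume {z | r < h z} := by
  refine (Real.ofReal_mul_volume_add_ofReal_mul_volume_le (measurableSet_lt measurable_const hf)
    (measurableSet_lt measurable_const hg) (lt_iSup_iff.1 hrf) (lt_iSup_iff.1 hrg) ht).trans
    (measure_mono ?_)
  rintro _ ⟨_, ⟨x, hx, rfl⟩, _, ⟨y, hy, rfl⟩, rfl⟩
  exact (lt_min hx hy).trans_le (hfgh x y)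

theorem lintegral_eq_lintegral_meas_ofReal_lt {α : Type*} [MeasurableSpace α] (μ : Measure α)
    {f : α → ℝ≥0∞} (hf : Measurable f) (hf_top : ∀ x, f x ≠ ⊤) :
    ∫⁻ x, f x ∂μ = ∫⁻ s in Ioi 0, μ {x | ENNReal.ofReal s < f x} := by
  have hf' (x : α) : f x = ENNReal.ofReal (f x).toReal := (ENNReal.ofReal_toReal (hf_top x)).symm
  rw [lintegral_congr hf', lintegral_eq_lintegral_meas_lt μ
    (.of_forall fun _ => ENNReal.toReal_nonneg) hf.ennreal_toReal.aemeasurable]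
  refine setLIntegral_congr_fun measurableSet_Ioi fun s hs => ?_
  simp_rw [ENNReal.ofReal_lt_iff_lt_toReal hs.le (hf_top _)]

theorem lintegral_eq_lintegral_Ioo_meas_ofReal_lt {α : Type*} [MeasurableSpace α]
    (μ : Measure α) {f : α → ℝ≥0∞} (hf : Measurable f) (hf_le : ∀ x, f x ≤ 1) :
    ∫⁻ x, f x ∂μ = ∫⁻ s in Ioo 0 1, μ {x | ENNReal.ofReal s < f x} := by
  rw [lintegral_eq_lintegral_meas_ofReal_lt μ hf
      fun x => ne_top_of_le_ne_top ENNReal.one_ne_top (hf_le x),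
    ← Iio_inter_Ioi, ← Measure.restrict_restrict measurableSet_Iio]
  refine (setLIntegral_eq_of_support_subset fun s hs => ?_).symm
  by_contra h1
  exact hs <| measure_mono_null (fun x hx =>
    ((hf_le x).trans (ENNReal.one_le_ofReal.2 (not_lt.1 h1))).not_gt hx) measure_empty

theorem Real.ofReal_mul_lintegral_add_ofReal_mul_lintegral_le {f g h : ℝ → ℝ≥0∞}
    (hf : Measurable f) (hg : Measurable g) (hh : Measurable h)
    (hf_sup : ⨆ x, f x = 1) (hg_sup : ⨆ y, g y = 1) (hh_top : ∀ z, h z ≠ ⊤)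
    {t : ℝ} (ht : t ∈ Ioo 0 1) (hfgh : ∀ x y, min (f x) (g y) ≤ h (t • x + (1 - t) • y)) :
    ENNReal.ofReal t * (∫⁻ x, f x) + ENNReal.ofReal (1 - t) * (∫⁻ y, g y) ≤ ∫⁻ z, h z := by
  have hmeas (φ : ℝ → ℝ≥0∞) : Measurable fun s : ℝ => volume {x | ENNReal.ofReal s < φ x} :=
    Antitone.measurable fun _ _ hst =>
      measure_mono fun _ hx => (ENNReal.ofReal_le_ofReal hst).trans_lt hx
  have hf_le (x : ℝ) : f x ≤ 1 := hf_sup ▸ le_iSup f x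
  have hg_le (y : ℝ) : g y ≤ 1 := hg_sup ▸ le_iSup g y
  rw [lintegral_eq_lintegral_Ioo_meas_ofReal_lt volume hf hf_le,
    lintegral_eq_lintegral_Ioo_meas_ofReal_lt volume hg hg_le,
    lintegral_eq_lintegral_meas_ofReal_lt volume hh hh_top, ← lintegral_const_mul _ (hmeas f),
    ← lintegral_const_mul _ (hmeas g), ← lintegral_add_left ((hmeas f).const_mul _)]
  refine (setLIntegral_mono' measurableSet_Ioo fun s hs => ?_).trans
    (lintegral_mono_set Ioo_subset_Ioi_self)
  have hs1 : ENNReal.ofReal s < 1 := ENNReal.ofReal_lt_one.2 hs.2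
  exact Real.ofReal_mul_volume_lt_add_ofReal_mul_volume_lt_le hf hg ht hfgh
    (hf_sup ▸ hs1) (hg_sup ▸ hs1)

theorem Real.lintegral_rpow_mul_lintegral_rpow_le {f g h : ℝ → ℝ≥0∞}
    (hf : Measurable f) (hg : Measurable g) (hh : Measurable h)
    (hf_top : ⨆ x, f x ≠ ⊤) (hg_top : ⨆ y, g y ≠ ⊤) (hh_top : ∀ z, h z ≠ ⊤)
    {t : ℝ} (ht : t ∈ Ioo 0 1) (hfgh : ∀ x y, f x ^ t * g y ^ (1 - t) ≤ h (t • x + (1 - t) • y)) :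
    (∫⁻ x, f x) ^ t * (∫⁻ y, g y) ^ (1 - t) ≤ ∫⁻ z, h z := by
  have ht' : 0 < 1 - t := sub_pos.2 ht.2
  set a := ⨆ x, f x
  set b := ⨆ y, g y
  rcases eq_or_ne a 0 with ha | ha
  · simp [ENNReal.iSup_eq_zero.1 ha, ENNReal.zero_rpow_of_pos ht.1]
  rcases eq_or_ne b 0 with hb | hb
  · simp [ENNReal.iSup_eq_zero.1 hb, ENNReal.zero_rpow_of_pos ht']
  set c := a ^ t * b ^ (1 - t)
  have hc : c ≠ 0 := mul_ne_zero (ENNReal.rpow_pos (pos_iff_ne_zero.2 ha) hf_top).ne'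
    (ENNReal.rpow_pos (pos_iff_ne_zero.2 hb) hg_top).ne'
  have hc_top : c ≠ ⊤ := ENNReal.mul_ne_top (ENNReal.rpow_ne_top_of_nonneg ht.1.le hf_top)
    (ENNReal.rpow_ne_top_of_nonneg ht'.le hg_top)
  have hscale (u v : ℝ≥0∞) : (a⁻¹ * u) ^ t * (b⁻¹ * v) ^ (1 - t) = c⁻¹ * (u ^ t * v ^ (1 - t)) := by
    rw [ENNReal.mul_rpow_of_nonneg _ _ ht.1.le, ENNReal.mul_rpow_of_nonneg _ _ ht'.le,
      ENNReal.inv_rpow, ENNReal.inv_rpow,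
      ENNReal.mul_inv (.inr (ENNReal.rpow_ne_top_of_nonneg ht'.le hg_top))
        (.inl (ENNReal.rpow_ne_top_of_nonneg ht.1.le hf_top))]
    ring
  have key := Real.ofReal_mul_lintegral_add_ofReal_mul_lintegral_le (hf.const_mul a⁻¹)
    (hg.const_mul b⁻¹) (hh.const_mul c⁻¹)
    (by rw [← ENNReal.mul_iSup, ENNReal.inv_mul_cancel ha hf_top])
    (by rw [← ENNReal.mul_iSup, ENNReal.inv_mul_cancel hb hg_top])
    (fun z => ENNReal.mul_ne_top (ENNReal.inv_ne_top.2 hc) (hh_top z)) ht fun x y =>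
      (ENNReal.min_le_rpow_mul_rpow _ _ ht).trans
        ((hscale _ _).trans_le (by gcongr; exact hfgh x y))
  rw [lintegral_const_mul _ hf, lintegral_const_mul _ hg, lintegral_const_mul _ hh] at key
  calc (∫⁻ x, f x) ^ t * (∫⁻ y, g y) ^ (1 - t)
      = c * ((a⁻¹ * ∫⁻ x, f x) ^ t * (b⁻¹ * ∫⁻ y, g y) ^ (1 - t)) := by
        rw [hscale, ← mul_assoc, ENNReal.mul_inv_cancel hc hc_top, one_mul]
    _ ≤ c * (ENNReal.ofReal t * (a⁻¹ * ∫⁻ x, f x)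
          + ENNReal.ofReal (1 - t) * (b⁻¹ * ∫⁻ y, g y)) := by
        gcongr; exact ENNReal.rpow_mul_rpow_le_add _ _ ht
    _ ≤ c * (c⁻¹ * ∫⁻ z, h z) := by gcongr
    _ = ∫⁻ z, h z := by rw [← mul_assoc, ENNReal.mul_inv_cancel hc hc_top, one_mul]

theorem IsCompact.preimage_prodMk {α β : Type*} [TopologicalSpace α] [TopologicalSpace β]
    [T2Space α] [T2Space β] {S : Set (α × β)} (hS : IsCompact S) (x : α) :
    IsCompact (Prod.mk x ⁻¹' S) :=
  (hS.image continuous_snd).of_isClosed_subset (hS.isClosed.preimage (.prodMk_right x))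
    fun y hy => ⟨(x, y), hy, rfl⟩

theorem Set.smul_preimage_prodMk_add_smul_subset {R α β : Type*} [SMul R α] [SMul R β] [Add α]
    [Add β] (a b : R) (x y : α) (C D : Set (α × β)) :
    a • (Prod.mk x ⁻¹' C) + b • (Prod.mk y ⁻¹' D)
      ⊆ Prod.mk (a • x + b • y) ⁻¹' (a • C + b • D) := by
  rintro _ ⟨_, ⟨u, hu, rfl⟩, _, ⟨v, hv, rfl⟩, rfl⟩
  exact ⟨_, smul_mem_smul_set hu, _, smul_mem_smul_set hv, rfl⟩

def HasMulBrunnMinkowski (E : Type*) [TopologicalSpace E] [Add E] [SMul ℝ E] [MeasureSpace E] :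
    Prop :=
  ∀ ⦃C D : Set E⦄, IsCompact C → IsCompact D → ∀ ⦃t : ℝ⦄, t ∈ Ioo 0 1 →
    volume C ^ t * volume D ^ (1 - t) ≤ volume (t • C + (1 - t) • D)

namespace HasMulBrunnMinkowski

theorem prod_real {E : Type*} [NormedAddCommGroup E] [NormedSpace ℝ E] [MeasureSpace E]
    [BorelSpace E] [SFinite (volume : Measure E)] [IsFiniteMeasureOnCompacts (volume : Measure E)]
    (hE : HasMulBrunnMinkowski E) : HasMulBrunnMinkowski (ℝ × E) := by
  intro C D hC hD t ht
  have hS : IsCompact (t • C + (1 - t) • D) := (hC.smul t).add (hD.smul (1 - t))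
  have hslices {S : Set (ℝ × E)} (hS : IsCompact S) : ⨆ x, volume (Prod.mk x ⁻¹' S) ≠ ⊤ :=
    ne_top_of_le_ne_top (hS.image continuous_snd).measure_ne_top
      (iSup_le fun x => measure_mono fun y hy => ⟨(x, y), hy, rfl⟩)
  rw [Measure.volume_eq_prod, Measure.prod_apply hC.measurableSet,
    Measure.prod_apply hD.measurableSet, Measure.prod_apply hS.measurableSet]
  exact Real.lintegral_rpow_mul_lintegral_rpow_le
    (measurable_measure_prodMk_left hC.measurableSet)
    (measurable_measure_prodMk_left hD.measurableSet)
    (measurable_measure_prodMk_left hS.measurableSet)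
    (hslices hC) (hslices hD) (fun z => (hS.preimage_prodMk z).measure_ne_top) ht fun x y =>
      (hE (hC.preimage_prodMk x) (hD.preimage_prodMk y) ht).trans
        (measure_mono (smul_preimage_prodMk_add_smul_subset _ _ _ _ _ _))

theorem of_linearMap {E F : Type*} [TopologicalSpace E] [AddCommMonoid E] [Module ℝ E]
    [MeasureSpace E] [TopologicalSpace F] [AddCommMonoid F] [Module ℝ F] [MeasureSpace F]
    (hE : HasMulBrunnMinkowski E) (e : F →ₗ[ℝ] E) (he : Continuous e)
    (he_vol : ∀ S, volume (e '' S) = volume S) : HasMulBrunnMinkowski F := by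
  intro C D hC hD t ht
  have := hE (hC.image he) (hD.image he) ht
  rwa [he_vol, he_vol, ← image_smul_set, ← image_smul_set, ← image_add, he_vol] at this

end HasMulBrunnMinkowski

theorem hasMulBrunnMinkowski_pi (n : ℕ) : HasMulBrunnMinkowski (Fin n → ℝ) := by
  induction n with
  | zero =>
    intro C D _ _ t ht
    rcases C.eq_empty_or_nonempty with rfl | hC
    · simp [ENNReal.zero_rpow_of_pos ht.1]
    rcases D.eq_empty_or_nonempty with rfl | hD
    · simp [ENNReal.zero_rpow_of_pos (sub_pos.2 ht.2)]
    rw [(hC.smul_set.add hD.smul_set).eq_univ, hC.eq_univ, hD.eq_univ]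
    simp [volume_pi]
  | succ n ih =>
    let e : (Fin (n + 1) → ℝ) →ₗ[ℝ] ℝ × (Fin n → ℝ) :=
      { toFun := MeasurableEquiv.piFinSuccAbove (fun _ => ℝ) 0
        map_add' := fun _ _ => rfl
        map_smul' := fun _ _ => rfl }
    refine ih.prod_real.of_linearMap e (LinearMap.continuous_of_finiteDimensional e) fun S => ?_
    change volume (MeasurableEquiv.piFinSuccAbove (fun _ => ℝ) 0 '' S) = volume S
    rw [MeasurableEquiv.image_eq_preimage_symm]
    exact (volume_preserving_piFinSuccAbove (fun _ => ℝ) 0).symm.measure_preimage_equiv S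

theorem stmt10_general (n : ℕ) (A B : Set (ℝ × (Fin n → ℝ))) (t : ℝ) (ht : t ∈ Set.Ioo (0:ℝ) 1)
    (hA : IsCompact A) (hB : IsCompact B)
    (s : ℝ)
    (hs : ENNReal.ofReal s <
      min (⨆ x : ℝ, volume {y | (x, y) ∈ A}) (⨆ x : ℝ, volume {y | (x, y) ∈ B})) :
    ENNReal.ofReal t * volume {x : ℝ | ENNReal.ofReal s < volume {y | (x, y) ∈ A}}
      + ENNReal.ofReal (1 - t) * volume {x : ℝ | ENNReal.ofReal s < volume {y | (x, y) ∈ B}}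
    ≤ volume {x : ℝ | ENNReal.ofReal s < volume {y | (x, y) ∈ t • A + (1 - t) • B}} := by
  refine Real.ofReal_mul_volume_lt_add_ofReal_mul_volume_lt_le
    (measurable_measure_prodMk_left hA.measurableSet)
    (measurable_measure_prodMk_left hB.measurableSet)
    ht (fun x y => ?_) (hs.trans_le (min_le_left _ _)) (hs.trans_le (min_le_right _ _))
  calc min (volume (Prod.mk x ⁻¹' A)) (volume (Prod.mk y ⁻¹' B))
      ≤ volume (Prod.mk x ⁻¹' A) ^ t * volume (Prod.mk y ⁻¹' B) ^ (1 - t) :=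
        ENNReal.min_le_rpow_mul_rpow _ _ ht
    _ ≤ volume (t • Prod.mk x ⁻¹' A + (1 - t) • Prod.mk y ⁻¹' B) :=
        hasMulBrunnMinkowski_pi n (hA.preimage_prodMk x) (hB.preimage_prodMk y) ht
    _ ≤ volume (Prod.mk (t • x + (1 - t) • y) ⁻¹' (t • A + (1 - t) • B)) :=
        measure_mono (smul_preimage_prodMk_add_smul_subset _ _ _ _ _ _)

theorem stmt10 (n : ℕ) (A B : Set (ℝ × (Fin n → ℝ))) (t : ℝ) (ht : t ∈ Set.Ioo (0:ℝ) 1)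
    (hA : IsCompact A) (hB : IsCompact B)
    (s : ℝ) (hs0 : 0 ≤ s)
    (hs : ENNReal.ofReal s <
      min (⨆ x : ℝ, volume {y | (x, y) ∈ A}) (⨆ x : ℝ, volume {y | (x, y) ∈ B})) :
    ENNReal.ofReal t * volume {x : ℝ | ENNReal.ofReal s < volume {y | (x, y) ∈ A}}
      + ENNReal.ofReal (1 - t) * volume {x : ℝ | ENNReal.ofReal s < volume {y | (x, y) ∈ B}}
    ≤ volume {x : ℝ | ENNReal.ofReal s < volume {y | (x, y) ∈ t • A + (1 - t) • B}} :=
  stmt10_general n A B t ht hA hB s hs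
end

section
/- Let A, B ⊆ ℝ² be compact with |A| = 1 + O(δ), |B| = 1 + O(δ), |tA + (1-t)B| < 1 + δ for t in a compact subset of (0,1). Suppose there is a ball ℬ of fixed radius R centered at 0 with |A ∩ ℬ| = 1 + o_δ(1) and |B ∩ ℬ| = 1 + o_δ(1). Then for sufficiently small δ, A and B are contained in the ball of radius R' = t^{-1}(2-t)R (and the analogous radius with t replaced by 1-t, respectively). -/
open MeasureTheory Set Filter Metric
open scoped Pointwise ENNReal Topology

/-!
Write `A' = A ∩ closedBall 0 R` and `B' = B ∩ closedBall 0 R`. The set `t • A' + (1 - t) • B'`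
lies in `closedBall 0 R` and, by the weak Brunn–Minkowski inequality
`min |X| |Y| ≤ |t • X + (1 - t) • Y|`, has measure at least `1 - o(1)`. If some `z ∈ A` had
`‖z‖ > t⁻¹ (2 - t) R`, the translate `t • z + (1 - t) • B'` would lie outside `closedBall 0 R`,
so `t • A + (1 - t) • B` would have measure at least `(1 + (1 - t)²)(1 - o(1)) > 1 + δ`. The
bound on `B` is the same statement with `A, t` and `B, 1 - t` exchanged.

Weak Brunn–Minkowski in the plane comes from slicing. If `f`, `g`, `h` are the lengths of the
vertical sections of `X`, `Y` and `t • X + (1 - t) • Y`, one-dimensional Brunn–Minkowski gives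
`t f a + (1 - t) g b ≤ h (t a + (1 - t) b)`. Dividing `f`, `g` by their suprema `P`, `Q` and `h`
by `c = t P + (1 - t) Q` turns this into `min (f a / P) (g b / Q) ≤ h (t a + (1 - t) b) / c`, and
one-dimensional Brunn–Minkowski for the superlevel sets, integrated over the level, gives
`t |X| / P + (1 - t) |Y| / Q ≤ |t • X + (1 - t) • Y| / c`. Since `c (t / P + (1 - t) / Q) ≥ 1`,
this yields the inequality.
-/

theorem MeasureTheory.measure_singleton_add {G : Type*} [MeasurableSpace G] [AddGroup G]
    [MeasurableAdd G] (μ : Measure G) [μ.IsAddLeftInvariant] (a : G) (s : Set G) :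
    μ ({a} + s) = μ s := by
  simp only [singleton_add, image_add_left, measure_preimage_add]

theorem Real.volume_add_volume_le_of_isCompact {K L : Set ℝ} (hK : IsCompact K)
    (hL : IsCompact L) (hKne : K.Nonempty) (hLne : L.Nonempty) :
    volume K + volume L ≤ volume (K + L) := by
  obtain ⟨x, hxK, hx⟩ := hK.exists_isGreatest hKne
  obtain ⟨y, hyL, hy⟩ := hL.exists_isLeast hLne
  have hinter : ({y} + K) ∩ ({x} + L) ⊆ {x + y} := by
    rintro _ ⟨⟨_, rfl, k, hk, rfl⟩, ⟨_, rfl, l, hl, hkl⟩⟩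
    have := hx hk
    have := hy hl
    rw [mem_singleton_iff]
    linarith
  have hsub : {y} + K ∪ ({x} + L) ⊆ K + L := by
    rw [add_comm ({y} : Set ℝ)]
    exact union_subset (add_subset_add_left (singleton_subset_iff.2 hyL))
      (add_subset_add_right (singleton_subset_iff.2 hxK))
  calc volume K + volume L = volume ({y} + K) + volume ({x} + L) := by
        rw [measure_singleton_add, measure_singleton_add]
    _ = volume ({y} + K ∪ ({x} + L)) := by
        rw [← measure_union_add_inter _ ((isCompact_singleton.add hL).measurableSet),
          measure_mono_null hinter (measure_singleton _), add_zero]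
    _ ≤ volume (K + L) := measure_mono hsub

theorem Real.volume_add_volume_le_of_measurableSet {U V : Set ℝ} (hU : MeasurableSet U)
    (hV : MeasurableSet V) (hUne : U.Nonempty) (hVne : V.Nonempty) :
    volume U + volume V ≤ volume (U + V) := by
  obtain ⟨u, hu⟩ := hUne
  obtain ⟨v, hv⟩ := hVne
  refine le_of_forall_lt fun r hr => ?_
  rcases eq_or_ne (volume U) 0 with hU0 | hU0
  · rw [hU0, zero_add, ← measure_singleton_add volume u] at hr
    exact hr.trans_le (measure_mono (add_subset_add_right (singleton_subset_iff.2 hu)))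
  rcases eq_or_ne (volume V) 0 with hV0 | hV0
  · rw [hV0, add_zero, ← measure_singleton_add volume v, ← add_comm] at hr
    exact hr.trans_le (measure_mono (add_subset_add_left (singleton_subset_iff.2 hv)))
  obtain ⟨a, ha, b, hb, hrab⟩ := ENNReal.exists_lt_add_of_lt_add hr hU0 hV0
  obtain ⟨K, hKU, hK, haK⟩ := hU.exists_lt_isCompact ha
  obtain ⟨L, hLV, hL, hbL⟩ := hV.exists_lt_isCompact hb
  calc r < a + b := hrab
    _ < volume K + volume L := ENNReal.add_lt_add haK hbL
    _ ≤ volume (K + L) := Real.volume_add_volume_le_of_isCompact hK hL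
        (nonempty_of_measure_ne_zero (zero_le.trans_lt haK).ne')
        (nonempty_of_measure_ne_zero (zero_le.trans_lt hbL).ne')
    _ ≤ volume (U + V) := measure_mono (add_subset_add hKU hLV)

theorem Real.volume_smul_add_smul_le {U V : Set ℝ} (hU : MeasurableSet U)
    (hV : MeasurableSet V) (hUne : U.Nonempty) (hVne : V.Nonempty) {r s : ℝ} (hr : 0 < r)
    (hs : 0 < s) :
    ENNReal.ofReal r * volume U + ENNReal.ofReal s * volume V ≤ volume (r • U + s • V) := by
  have := Real.volume_add_volume_le_of_measurableSet (hU.const_smul_of_ne_zero hr.ne')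
    (hV.const_smul_of_ne_zero hs.ne') (hUne.smul_set) (hVne.smul_set)
  simpa [Measure.addHaar_smul_of_nonneg, abs_of_pos, hr, hs] using this

theorem lintegral_ofReal_le_setLIntegral_Ioo_measure_lt {α : Type*} [MeasurableSpace α]
    (μ : Measure α) {f : α → ℝ} (hf : Measurable f) (hf0 : 0 ≤ f)
    (hf1 : ∀ x, f x ≤ 1) :
    ∫⁻ x, ENNReal.ofReal (f x) ∂μ ≤ ∫⁻ u in Ioo 0 1, μ {x | u < f x} := by
  have hIci : ∫⁻ u in Ici 1, μ {x | u < f x} = 0 := by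
    refine (setLIntegral_congr_fun measurableSet_Ici fun u (hu : 1 ≤ u) => ?_).trans
      lintegral_zero
    exact measure_mono_null (fun x (hx : u < f x) => (hf1 x).not_gt (hu.trans_lt hx)) measure_empty
  calc ∫⁻ x, ENNReal.ofReal (f x) ∂μ = ∫⁻ u in Ioi 0, μ {x | u < f x} :=
        lintegral_eq_lintegral_meas_lt μ (ae_of_all _ hf0) hf.aemeasurable
    _ ≤ ∫⁻ u in Ioo 0 1 ∪ Ici 1, μ {x | u < f x} :=
        lintegral_mono_set fun u (hu : 0 < u) => (lt_or_ge u 1).imp (fun h => ⟨hu, h⟩) id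
    _ ≤ (∫⁻ u in Ioo 0 1, μ {x | u < f x}) + ∫⁻ u in Ici 1, μ {x | u < f x} :=
        lintegral_union_le _ _ _
    _ = ∫⁻ u in Ioo 0 1, μ {x | u < f x} := by rw [hIci, add_zero]

theorem Real.lintegral_convexComb_le_of_min_le {t : ℝ} (ht0 : 0 < t) (ht1 : t < 1)
    {f g h : ℝ → ℝ} (hf : Measurable f) (hg : Measurable g) (hh : Measurable h)
    (hf0 : 0 ≤ f) (hg0 : 0 ≤ g) (hh0 : 0 ≤ h)
    (hf1 : IsLUB (range f) 1) (hg1 : IsLUB (range g) 1)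
    (hfgh : ∀ x y, min (f x) (g y) ≤ h (t * x + (1 - t) * y)) :
    ENNReal.ofReal t * (∫⁻ x, ENNReal.ofReal (f x))
      + ENNReal.ofReal (1 - t) * ∫⁻ y, ENNReal.ofReal (g y)
      ≤ ∫⁻ z, ENNReal.ofReal (h z) := by
  have levelSet : ∀ u ∈ Ioo (0 : ℝ) 1, ENNReal.ofReal t * volume {x | u < f x}
      + ENNReal.ofReal (1 - t) * volume {y | u < g y} ≤ volume {z | u < h z} := by
    rintro u ⟨-, hu1⟩
    obtain ⟨_, ⟨x, rfl⟩, hx, -⟩ := hf1.exists_between hu1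
    obtain ⟨_, ⟨y, rfl⟩, hy, -⟩ := hg1.exists_between hu1
    refine (Real.volume_smul_add_smul_le (measurableSet_lt measurable_const hf)
      (measurableSet_lt measurable_const hg) ⟨x, hx⟩ ⟨y, hy⟩ ht0 (sub_pos.2 ht1)).trans
      (measure_mono ?_)
    rintro _ ⟨_, ⟨x, hx, rfl⟩, _, ⟨y, hy, rfl⟩, rfl⟩
    exact (lt_min hx hy).trans_le (hfgh x y)
  calc ENNReal.ofReal t * (∫⁻ x, ENNReal.ofReal (f x))
        + ENNReal.ofReal (1 - t) * ∫⁻ y, ENNReal.ofReal (g y)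
      ≤ ENNReal.ofReal t * (∫⁻ u in Ioo 0 1, volume {x | u < f x})
        + ENNReal.ofReal (1 - t) * ∫⁻ u in Ioo 0 1, volume {y | u < g y} := by
        gcongr ENNReal.ofReal t * ?_ + ENNReal.ofReal (1 - t) * ?_
        · exact lintegral_ofReal_le_setLIntegral_Ioo_measure_lt _ hf hf0
            fun x => hf1.1 ⟨x, rfl⟩
        · exact lintegral_ofReal_le_setLIntegral_Ioo_measure_lt _ hg hg0
            fun y => hg1.1 ⟨y, rfl⟩
    _ = (∫⁻ u in Ioo 0 1, ENNReal.ofReal t * volume {x | u < f x})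
          + ∫⁻ u in Ioo 0 1, ENNReal.ofReal (1 - t) * volume {y | u < g y} := by
        rw [lintegral_const_mul' _ _ ENNReal.ofReal_ne_top,
          lintegral_const_mul' _ _ ENNReal.ofReal_ne_top]
    _ ≤ ∫⁻ u in Ioo 0 1, (ENNReal.ofReal t * volume {x | u < f x}
          + ENNReal.ofReal (1 - t) * volume {y | u < g y}) := le_lintegral_add _ _
    _ ≤ ∫⁻ u in Ioo 0 1, volume {z | u < h z} := setLIntegral_mono' measurableSet_Ioo levelSet
    _ ≤ ∫⁻ u in Ioi 0, volume {z | u < h z} := lintegral_mono_set Ioo_subset_Ioi_self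
    _ = ∫⁻ z, ENNReal.ofReal (h z) :=
        (lintegral_eq_lintegral_meas_lt _ (ae_of_all _ hh0) hh.aemeasurable).symm

theorem one_le_convexComb_mul_convexComb_inv {t P Q : ℝ} (ht0 : 0 < t) (ht1 : t < 1)
    (hP : 0 < P) (hQ : 0 < Q) : 1 ≤ (t * P + (1 - t) * Q) * (t / P + (1 - t) / Q) := by
  have ht1' := sub_pos.2 ht1
  rw [← sub_nonneg, show (t * P + (1 - t) * Q) * (t / P + (1 - t) / Q) - 1
    = t * (1 - t) * (P - Q) ^ 2 / (P * Q) by field_simp; ring]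
  positivity

theorem ENNReal.min_le_of_convexComb_le {t P Q : ℝ} (ht0 : 0 < t) (ht1 : t < 1) (hP : 0 < P)
    (hQ : 0 < Q) {x y s : ℝ≥0∞}
    (h : ENNReal.ofReal t * (x * ENNReal.ofReal P⁻¹)
        + ENNReal.ofReal (1 - t) * (y * ENNReal.ofReal Q⁻¹)
      ≤ s * ENNReal.ofReal (t * P + (1 - t) * Q)⁻¹) :
    min x y ≤ s := by
  have ht1' := sub_pos.2 ht1
  set c := t * P + (1 - t) * Q
  have hc : 0 < c := by positivity
  calc min x y ≤ ENNReal.ofReal (c * (t / P + (1 - t) / Q)) * min x y :=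
        le_mul_of_one_le_left zero_le (ENNReal.one_le_ofReal.2
          (one_le_convexComb_mul_convexComb_inv ht0 ht1 hP hQ))
    _ = ENNReal.ofReal c * (ENNReal.ofReal t * (min x y * ENNReal.ofReal P⁻¹)
          + ENNReal.ofReal (1 - t) * (min x y * ENNReal.ofReal Q⁻¹)) := by
        rw [ENNReal.ofReal_mul hc.le,
          ENNReal.ofReal_add (div_nonneg ht0.le hP.le) (div_nonneg ht1'.le hQ.le),
          div_eq_mul_inv, div_eq_mul_inv, ENNReal.ofReal_mul ht0.le, ENNReal.ofReal_mul ht1'.le]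
        ring
    _ ≤ ENNReal.ofReal c * (ENNReal.ofReal t * (x * ENNReal.ofReal P⁻¹)
          + ENNReal.ofReal (1 - t) * (y * ENNReal.ofReal Q⁻¹)) := by
        gcongr
        · exact min_le_left _ _
        · exact min_le_right _ _
    _ ≤ ENNReal.ofReal c * (s * ENNReal.ofReal c⁻¹) := by gcongr
    _ = s := by
        rw [mul_comm s, ← mul_assoc, ← ENNReal.ofReal_mul hc.le, mul_inv_cancel₀ hc.ne',
          ENNReal.ofReal_one, one_mul]

noncomputable def sectionVolume (X : Set (ℝ × ℝ)) (a : ℝ) : ℝ :=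
  (volume (Prod.mk a ⁻¹' X)).toReal

section SectionVolume

variable {X Y : Set (ℝ × ℝ)}

theorem volume_preimage_prodMk_ne_top (hX : IsCompact X) (a : ℝ) :
    volume (Prod.mk a ⁻¹' X) ≠ ∞ :=
  ((hX.image continuous_snd).measure_lt_top.trans_le' <|
    measure_mono fun v hv => ⟨(a, v), hv, rfl⟩).ne

theorem measurable_sectionVolume (hX : MeasurableSet X) : Measurable (sectionVolume X) :=
  (measurable_measure_prodMk_left hX).ennreal_toReal

theorem sectionVolume_nonneg (X : Set (ℝ × ℝ)) : 0 ≤ sectionVolume X :=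
  fun _ => ENNReal.toReal_nonneg

theorem bddAbove_range_sectionVolume (hX : IsCompact X) : BddAbove (range (sectionVolume X)) :=
  ⟨(volume (Prod.snd '' X)).toReal, by
    rintro _ ⟨a, rfl⟩
    exact ENNReal.toReal_mono (hX.image continuous_snd).measure_lt_top.ne
      (measure_mono fun v hv => ⟨(a, v), hv, rfl⟩)⟩

theorem ofReal_sectionVolume (hX : IsCompact X) (a : ℝ) :
    ENNReal.ofReal (sectionVolume X a) = volume (Prod.mk a ⁻¹' X) :=
  ENNReal.ofReal_toReal (volume_preimage_prodMk_ne_top hX a)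

theorem lintegral_sectionVolume (hX : IsCompact X) :
    ∫⁻ a, ENNReal.ofReal (sectionVolume X a) = volume X := by
  simp only [ofReal_sectionVolume hX]
  rw [Measure.volume_eq_prod, Measure.prod_apply hX.measurableSet]

theorem iSup_sectionVolume_pos (hX : IsCompact X) (hX0 : volume X ≠ 0) :
    0 < ⨆ a, sectionVolume X a := by
  obtain ⟨a, ha⟩ : ∃ a, sectionVolume X a ≠ 0 := by
    by_contra! h
    simp [← lintegral_sectionVolume hX, h] at hX0
  exact ((sectionVolume_nonneg X a).lt_of_ne' ha).trans_le
    (le_ciSup (bddAbove_range_sectionVolume hX) a)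

theorem isLUB_sectionVolume_div_iSup (hX : IsCompact X) (hX0 : volume X ≠ 0) :
    IsLUB (range fun a => sectionVolume X a / ⨆ a, sectionVolume X a) 1 := by
  have hP := iSup_sectionVolume_pos hX hX0
  simpa [← range_comp, Function.comp_def, div_eq_mul_inv, hP.ne'] using
    (isLUB_ciSup (bddAbove_range_sectionVolume hX)).mul_right (inv_nonneg.2 hP.le)

theorem convexComb_sectionVolume_le {t : ℝ} (ht0 : 0 < t) (ht1 : t < 1) (hX : IsCompact X)
    (hY : IsCompact Y) {a b : ℝ} (ha : (Prod.mk a ⁻¹' X).Nonempty)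
    (hb : (Prod.mk b ⁻¹' Y).Nonempty) :
    t * sectionVolume X a + (1 - t) * sectionVolume Y b
      ≤ sectionVolume (t • X + (1 - t) • Y) (t * a + (1 - t) * b) := by
  have hsub : t • Prod.mk a ⁻¹' X + (1 - t) • Prod.mk b ⁻¹' Y
      ⊆ Prod.mk (t * a + (1 - t) * b) ⁻¹' (t • X + (1 - t) • Y) := by
    rintro _ ⟨_, ⟨v, hv, rfl⟩, _, ⟨w, hw, rfl⟩, rfl⟩
    exact ⟨_, smul_mem_smul_set hv, _, smul_mem_smul_set hw, rfl⟩
  have h1D := (Real.volume_smul_add_smul_le (measurableSet_preimage measurable_prodMk_left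
    hX.measurableSet) (measurableSet_preimage measurable_prodMk_left hY.measurableSet) ha hb ht0
    (sub_pos.2 ht1)).trans (measure_mono hsub)
  refine (ENNReal.ofReal_le_iff_le_toReal (volume_preimage_prodMk_ne_top
    ((hX.smul t).add (hY.smul (1 - t))) _)).1 (le_of_eq_of_le ?_ h1D)
  rw [ENNReal.ofReal_add (mul_nonneg ht0.le (sectionVolume_nonneg X a))
    (mul_nonneg (sub_pos.2 ht1).le (sectionVolume_nonneg Y b)), ENNReal.ofReal_mul ht0.le,
    ENNReal.ofReal_mul (sub_pos.2 ht1).le, ofReal_sectionVolume hX, ofReal_sectionVolume hY]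

theorem min_sectionVolume_div_le {t : ℝ} (ht0 : 0 < t) (ht1 : t < 1) (hX : IsCompact X)
    (hY : IsCompact Y) {P Q : ℝ} (hP : 0 < P) (hQ : 0 < Q) (a b : ℝ) :
    min (sectionVolume X a / P) (sectionVolume Y b / Q)
      ≤ sectionVolume (t • X + (1 - t) • Y) (t * a + (1 - t) * b)
        / (t * P + (1 - t) * Q) := by
  have hc : 0 < t * P + (1 - t) * Q := by have := sub_pos.2 ht1; positivity
  have hS0 :=
    div_nonneg (sectionVolume_nonneg (t • X + (1 - t) • Y) (t * a + (1 - t) * b)) hc.le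
  rcases (Prod.mk a ⁻¹' X).eq_empty_or_nonempty with ha | ha
  · exact (min_le_left _ _).trans (by simpa [sectionVolume, ha] using hS0)
  rcases (Prod.mk b ⁻¹' Y).eq_empty_or_nonempty with hb | hb
  · exact (min_le_right _ _).trans (by simpa [sectionVolume, hb] using hS0)
  set m := min (sectionVolume X a / P) (sectionVolume Y b / Q)
  rw [le_div_iff₀ hc]
  calc m * (t * P + (1 - t) * Q) = t * (m * P) + (1 - t) * (m * Q) := by ring
    _ ≤ t * sectionVolume X a + (1 - t) * sectionVolume Y b := by
        gcongr
        · exact (mul_le_mul_of_nonneg_right (min_le_left _ _) hP.le).trans_eq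
            (div_mul_cancel₀ _ hP.ne')
        · exact (mul_le_mul_of_nonneg_right (min_le_right _ _) hQ.le).trans_eq
            (div_mul_cancel₀ _ hQ.ne')
    _ ≤ _ := convexComb_sectionVolume_le ht0 ht1 hX hY ha hb

theorem lintegral_sectionVolume_div (hX : IsCompact X) (c : ℝ) :
    ∫⁻ a, ENNReal.ofReal (sectionVolume X a / c) = volume X * ENNReal.ofReal c⁻¹ := by
  simp_rw [div_eq_mul_inv, ENNReal.ofReal_mul (sectionVolume_nonneg X _)]
  rw [lintegral_mul_const' _ _ ENNReal.ofReal_ne_top, lintegral_sectionVolume hX]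

end SectionVolume

theorem min_volume_le_volume_smul_add_one_sub_smul_prod {t : ℝ} (ht0 : 0 < t) (ht1 : t < 1)
    {X Y : Set (ℝ × ℝ)} (hX : IsCompact X) (hY : IsCompact Y) :
    min (volume X) (volume Y) ≤ volume (t • X + (1 - t) • Y) := by
  rcases eq_or_ne (volume X) 0 with hX0 | hX0
  · exact (min_le_left _ _).trans (hX0 ▸ zero_le)
  rcases eq_or_ne (volume Y) 0 with hY0 | hY0
  · exact (min_le_right _ _).trans (hY0 ▸ zero_le)
  have hS : IsCompact (t • X + (1 - t) • Y) := (hX.smul t).add (hY.smul (1 - t))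
  have hP := iSup_sectionVolume_pos hX hX0
  have hQ := iSup_sectionVolume_pos hY hY0
  have hc : 0 < t * (⨆ a, sectionVolume X a) + (1 - t) * ⨆ b, sectionVolume Y b := by
    have := sub_pos.2 ht1
    positivity
  have key := Real.lintegral_convexComb_le_of_min_le ht0 ht1
    ((measurable_sectionVolume hX.measurableSet).div_const _)
    ((measurable_sectionVolume hY.measurableSet).div_const _)
    ((measurable_sectionVolume hS.measurableSet).div_const _)
    (fun a => div_nonneg (sectionVolume_nonneg X a) hP.le)
    (fun b => div_nonneg (sectionVolume_nonneg Y b) hQ.le)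
    (fun s => div_nonneg (sectionVolume_nonneg _ s) hc.le)
    (isLUB_sectionVolume_div_iSup hX hX0) (isLUB_sectionVolume_div_iSup hY hY0)
    (min_sectionVolume_div_le ht0 ht1 hX hY hP hQ)
  rw [lintegral_sectionVolume_div hX, lintegral_sectionVolume_div hY,
    lintegral_sectionVolume_div hS] at key
  exact ENNReal.min_le_of_convexComb_le ht0 ht1 hP hQ key

theorem EuclideanSpace.min_volume_le_volume_smul_add_one_sub_smul {t : ℝ} (ht0 : 0 < t)
    (ht1 : t < 1) {X Y : Set (EuclideanSpace ℝ (Fin 2))} (hX : IsCompact X) (hY : IsCompact Y) :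
    min (volume X) (volume Y) ≤ volume (t • X + (1 - t) • Y) := by
  let L := (EuclideanSpace.equiv (Fin 2) ℝ).trans (ContinuousLinearEquiv.finTwoArrow ℝ ℝ)
  have hL : MeasurePreserving L :=
    (volume_preserving_finTwoArrow ℝ).comp (PiLp.volume_preserving_ofLp (Fin 2))
  have hvol : ∀ Z, IsCompact Z → volume (L '' Z) = volume Z := fun Z hZ => by
    rw [← hL.measure_preimage (hZ.image L.continuous).measurableSet.nullMeasurableSet,
      preimage_image_eq Z L.injective]
  rw [← hvol X hX, ← hvol Y hY, ← hvol _ ((hX.smul t).add (hY.smul (1 - t))), image_add,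
    image_smul_set, image_smul_set]
  exact min_volume_le_volume_smul_add_one_sub_smul_prod ht0 ht1 (hX.image L.continuous)
    (hY.image L.continuous)

theorem measure_add_measure_singleton_add_le_of_lt_norm {E : Type*} [NormedAddCommGroup E]
    [NormedSpace ℝ E] [MeasurableSpace E] [BorelSpace E] (μ : Measure E) {t : ℝ} (ht0 : 0 < t)
    (ht1 : t < 1) {A B : Set E} (hB : IsCompact B) {R : ℝ} {z : E} (hz : z ∈ A)
    (hfar : (2 - t) * R < t * ‖z‖) :
    μ (t • (A ∩ closedBall 0 R) + (1 - t) • (B ∩ closedBall 0 R))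
      + μ ({t • z} + (1 - t) • (B ∩ closedBall 0 R)) ≤ μ (t • A + (1 - t) • B) := by
  set B' := B ∩ closedBall 0 R
  have hfarSet : ∀ x ∈ {t • z} + (1 - t) • B', R < ‖x‖ := by
    rintro _ ⟨_, rfl, _, ⟨b, hb, rfl⟩, rfl⟩
    have hb : ‖b‖ ≤ R := mem_closedBall_zero_iff.1 hb.2
    show R < ‖t • z + (1 - t) • b‖
    have := norm_sub_le (t • z + (1 - t) • b) ((1 - t) • b)
    rw [add_sub_cancel_right, norm_smul, norm_smul,
      Real.norm_of_nonneg ht0.le, Real.norm_of_nonneg (sub_pos.2 ht1).le] at this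
    nlinarith
  have hdisj :
      Disjoint (t • (A ∩ closedBall 0 R) + (1 - t) • B') ({t • z} + (1 - t) • B') :=
    disjoint_left.2 fun x hx hx' => (hfarSet x hx').not_ge <| mem_closedBall_zero_iff.1 <|
      (convex_closedBall 0 R).set_combo_subset ht0.le (sub_pos.2 ht1).le (add_sub_cancel t 1)
        (add_subset_add (smul_set_mono inter_subset_right) (smul_set_mono inter_subset_right) hx)
  rw [← measure_union hdisj
    ((isCompact_singleton.add ((hB.inter_right isClosed_closedBall).smul _)).measurableSet)]
  exact measure_mono (union_subset
    (add_subset_add (smul_set_mono inter_subset_left) (smul_set_mono inter_subset_left))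
    (add_subset_add (singleton_subset_iff.2 (smul_mem_smul_set hz))
      (smul_set_mono inter_subset_left)))

theorem EuclideanSpace.left_subset_closedBall_of_volume_smul_add_smul_lt {t : ℝ} (ht0 : 0 < t)
    (ht1 : t < 1) {A B : Set (EuclideanSpace ℝ (Fin 2))} (hA : IsCompact A) (hB : IsCompact B)
    {R : ℝ} {m : ℝ≥0∞} (hAm : m ≤ volume (A ∩ closedBall 0 R))
    (hBm : m ≤ volume (B ∩ closedBall 0 R))
    (hsum : volume (t • A + (1 - t) • B) < (1 + ENNReal.ofReal ((1 - t) ^ 2)) * m) :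
    A ⊆ closedBall 0 (t⁻¹ * (2 - t) * R) := by
  intro z hz
  by_contra hzR
  have hfar : (2 - t) * R < t * ‖z‖ := by
    have := mul_lt_mul_of_pos_left (not_le.1 (mt mem_closedBall_zero_iff.2 hzR)) ht0
    rwa [← mul_assoc, ← mul_assoc, mul_inv_cancel₀ ht0.ne', one_mul] at this
  refine hsum.not_ge ?_
  calc (1 + ENNReal.ofReal ((1 - t) ^ 2)) * m
      = m + ENNReal.ofReal ((1 - t) ^ 2) * m := by rw [add_mul, one_mul]
    _ ≤ min (volume (A ∩ closedBall 0 R)) (volume (B ∩ closedBall 0 R))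
        + ENNReal.ofReal ((1 - t) ^ 2) * volume (B ∩ closedBall 0 R) := by
        gcongr
        exact le_min hAm hBm
    _ ≤ volume (t • (A ∩ closedBall 0 R) + (1 - t) • (B ∩ closedBall 0 R))
        + volume ({t • z} + (1 - t) • (B ∩ closedBall 0 R)) := by
        rw [measure_singleton_add, Measure.addHaar_smul_of_nonneg _ (sub_pos.2 ht1).le,
          finrank_euclideanSpace_fin]
        gcongr
        exact EuclideanSpace.min_volume_le_volume_smul_add_one_sub_smul ht0 ht1
          (hA.inter_right isClosed_closedBall) (hB.inter_right isClosed_closedBall)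
    _ ≤ volume (t • A + (1 - t) • B) :=
        measure_add_measure_singleton_add_le_of_lt_norm _ ht0 ht1 hB hz hfar

theorem EuclideanSpace.right_subset_closedBall_of_volume_smul_add_smul_lt {t : ℝ} (ht0 : 0 < t)
    (ht1 : t < 1) {A B : Set (EuclideanSpace ℝ (Fin 2))} (hA : IsCompact A) (hB : IsCompact B)
    {R : ℝ} {m : ℝ≥0∞} (hAm : m ≤ volume (A ∩ closedBall 0 R))
    (hBm : m ≤ volume (B ∩ closedBall 0 R))
    (hsum : volume (t • A + (1 - t) • B) < (1 + ENNReal.ofReal (t ^ 2)) * m) :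
    B ⊆ closedBall 0 ((1 - t)⁻¹ * (1 + t) * R) := by
  have h := EuclideanSpace.left_subset_closedBall_of_volume_smul_add_smul_lt (t := 1 - t)
    (sub_pos.2 ht1) (sub_lt_self 1 ht0) hB hA hBm hAm (by rwa [sub_sub_cancel, add_comm])
  convert h using 3
  ring

theorem IsCompact.exists_pos_forall_le_and_le_one_sub {Λ : Set ℝ} (hΛ : IsCompact Λ)
    (hΛsub : Λ ⊆ Ioo 0 1) : ∃ ε > 0, ∀ t ∈ Λ, ε ≤ t ∧ ε ≤ 1 - t := by
  rcases Λ.eq_empty_or_nonempty with rfl | hne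
  · exact ⟨1, one_pos, by simp⟩
  refine ⟨min (sInf Λ) (1 - sSup Λ), lt_min (hΛsub (hΛ.sInf_mem hne)).1
    (sub_pos.2 (hΛsub (hΛ.sSup_mem hne)).2), fun t ht => ⟨?_, ?_⟩⟩
  · exact (min_le_left _ _).trans (csInf_le hΛ.bddBelow ht)
  · exact (min_le_right _ _).trans (sub_le_sub_left (le_csSup hΛ.bddAbove ht) 1)

theorem ofReal_one_sub_le_of_abs_toReal_sub_one_le {x : ℝ≥0∞} {η : ℝ}
    (h : |x.toReal - 1| ≤ η) : ENNReal.ofReal (1 - η) ≤ x :=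
  ENNReal.ofReal_le_of_le_toReal (by linarith [(abs_le.1 h).1])

theorem ofReal_one_add_le_one_add_ofReal_mul_ofReal_one_sub {ε δ η κ : ℝ}
    (hδ : δ < ε ^ 2 / 2) (hη : η < ε ^ 2 / 4) (hκ : ε ^ 2 ≤ κ) (hκ1 : κ ≤ 1) :
    ENNReal.ofReal (1 + δ) ≤ (1 + ENNReal.ofReal κ) * ENNReal.ofReal (1 - η) := by
  have hκ0 : 0 ≤ κ := (sq_nonneg ε).trans hκ
  rw [← ENNReal.ofReal_one, ← ENNReal.ofReal_add zero_le_one hκ0,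
    ← ENNReal.ofReal_mul (by positivity)]
  refine ENNReal.ofReal_le_ofReal ?_
  rcases le_or_gt 0 η with hη0 | hη0 <;> nlinarith

theorem stmt15_general (Λ : Set ℝ) (hΛ : IsCompact Λ) (hΛsub : Λ ⊆ Set.Ioo 0 1)
    (R : ℝ) (C₁ : ℝ)
    (e : ℝ → ℝ)
    (he : Tendsto e (𝓝[>] 0) (𝓝 0)) :
    ∃ δ₀ > (0:ℝ), ∀ δ : ℝ, 0 < δ → δ < δ₀ →
      ∀ A B : Set (EuclideanSpace ℝ (Fin 2)), ∀ t ∈ Λ,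
        IsCompact A → IsCompact B →
        |(volume A).toReal - 1| ≤ C₁ * δ →
        |(volume B).toReal - 1| ≤ C₁ * δ →
        volume (t • A + (1 - t) • B) < ENNReal.ofReal (1 + δ) →
        |(volume (A ∩ closedBall 0 R)).toReal - 1| ≤ e δ →
        |(volume (B ∩ closedBall 0 R)).toReal - 1| ≤ e δ →
        A ⊆ closedBall 0 (t⁻¹ * (2 - t) * R) ∧
        B ⊆ closedBall 0 ((1 - t)⁻¹ * (1 + t) * R) := by
  obtain ⟨ε, hε, hΛε⟩ := hΛ.exists_pos_forall_le_and_le_one_sub hΛsub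
  obtain ⟨u, hu, hue⟩ := mem_nhdsGT_iff_exists_Ioo_subset.1
    (he.eventually_lt_const (by positivity : (0 : ℝ) < ε ^ 2 / 4))
  refine ⟨min u (ε ^ 2 / 2), lt_min hu (by positivity),
    fun δ hδ hδ₀ A B t ht hA hB _ _ hsum hAR hBR => ?_⟩
  have hδε : δ < ε ^ 2 / 2 := hδ₀.trans_le (min_le_right _ _)
  have heδ : e δ < ε ^ 2 / 4 := hue ⟨hδ, hδ₀.trans_le (min_le_left _ _)⟩
  obtain ⟨ht0, ht1⟩ := hΛsub ht
  obtain ⟨htε, htε'⟩ := hΛε t ht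
  have hAm := ofReal_one_sub_le_of_abs_toReal_sub_one_le hAR
  have hBm := ofReal_one_sub_le_of_abs_toReal_sub_one_le hBR
  refine ⟨EuclideanSpace.left_subset_closedBall_of_volume_smul_add_smul_lt ht0 ht1 hA hB hAm hBm
      (hsum.trans_le ?_),
    EuclideanSpace.right_subset_closedBall_of_volume_smul_add_smul_lt ht0 ht1 hA hB hAm hBm
      (hsum.trans_le ?_)⟩
  · exact ofReal_one_add_le_one_add_ofReal_mul_ofReal_one_sub hδε heδ
      (pow_le_pow_left₀ hε.le htε' 2) (pow_le_one₀ (sub_pos.2 ht1).le (sub_le_self 1 ht0.le))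
  · exact ofReal_one_add_le_one_add_ofReal_mul_ofReal_one_sub hδε heδ
      (pow_le_pow_left₀ hε.le htε 2) (pow_le_one₀ ht0.le ht1.le)

theorem stmt15 (Λ : Set ℝ) (hΛ : IsCompact Λ) (hΛsub : Λ ⊆ Set.Ioo 0 1)
    (R : ℝ) (hR : 0 < R) (C₁ : ℝ) (hC₁ : 0 < C₁)
    (e : ℝ → ℝ) (he0 : ∀ δ > (0:ℝ), 0 ≤ e δ)
    (he : Tendsto e (𝓝[>] 0) (𝓝 0)) :
    ∃ δ₀ > (0:ℝ), ∀ δ : ℝ, 0 < δ → δ < δ₀ →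
      ∀ A B : Set (EuclideanSpace ℝ (Fin 2)), ∀ t ∈ Λ,
        IsCompact A → IsCompact B →
        |(volume A).toReal - 1| ≤ C₁ * δ →
        |(volume B).toReal - 1| ≤ C₁ * δ →
        volume (t • A + (1 - t) • B) < ENNReal.ofReal (1 + δ) →
        |(volume (A ∩ closedBall 0 R)).toReal - 1| ≤ e δ →
        |(volume (B ∩ closedBall 0 R)).toReal - 1| ≤ e δ →
        A ⊆ closedBall 0 (t⁻¹ * (2 - t) * R) ∧
        B ⊆ closedBall 0 ((1 - t)⁻¹ * (1 + t) * R) :=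
  stmt15_general Λ hΛ hΛsub R C₁ e he
end
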